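/- arXiv:2408.04446 — 8 statements merged into one kernel-verified Lean document; each statement's English description precedes it below -/
import Mathlib

section
/- Let (σ, d_σ) be a condition of ℙ(I), let n ∈ ℕ, and let g assign to each j < n a function g(j) : [0, j) → 2. Define σ[g] to be the pair (σ', d') where d'(ℓ) = 0 if d_σ(ℓ) < n and d'(ℓ) = d_σ(ℓ) otherwise, and σ'(ℓ)(i) = g(d_σ(ℓ))(i) for i < d_σ(ℓ) and σ'(ℓ)(i) = σ(ℓ)(i) for d_σ(ℓ) ≤ i < ℓ when d_σ(ℓ) < n, while σ'(ℓ) = σ(ℓ) otherwise. Then σ[g] is a condition of ℙ(I) and σ[g] ≤ σ. -/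
/-- `I` is an ideal on ℕ: contains `∅`, closed under subsets and finite unions. -/
def IsIdeal (I : Set (Set ℕ)) : Prop :=
  ∅ ∈ I ∧ (∀ A B : Set ℕ, A ⊆ B → B ∈ I → A ∈ I) ∧
    (∀ A B : Set ℕ, A ∈ I → B ∈ I → A ∪ B ∈ I)

/-- `(σ, d)` is a condition of `ℙ(I)`. -/
def IsCondition (I : Set (Set ℕ)) (σ : ℕ → ℕ → Bool) (d : ℕ → ℕ) : Prop :=
  (∀ n, d n ≤ n) ∧ (∀ n, {m | d m = n} ∈ I)

/-- The ordering on conditions of `ℙ(I)`. -/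
def CondLe (σ : ℕ → ℕ → Bool) (dσ : ℕ → ℕ) (τ : ℕ → ℕ → Bool) (dτ : ℕ → ℕ) : Prop :=
  (∀ n, dσ n ≤ dτ n ∧ ∀ i, dτ n ≤ i → i < n → σ n i = τ n i) ∧
  (∃ e : ℕ → ℕ, (∀ n, e n ≤ n) ∧ ∀ n, dσ n = e (dτ n)) ∧
  (∀ n m, dτ n = dτ m → ∀ i, dσ n ≤ i → i < dτ n → σ n i = σ m i)

/-- Lemma: if `σ` is a condition, `n ∈ ℕ` and `g` assigns to each `j < n` a
function `g j : [0, j) → 2`, then the amalgamation `σ[g]` is a condition and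
`σ[g] ≤ σ`. -/
theorem amalg_le (I : Set (Set ℕ)) (hI : IsIdeal I)
    (σ : ℕ → ℕ → Bool) (dσ : ℕ → ℕ) (hσ : IsCondition I σ dσ)
    (n : ℕ) (g : ℕ → ℕ → Bool) :
    IsCondition I
      (fun ℓ i => if dσ ℓ < n ∧ i < dσ ℓ then g (dσ ℓ) i else σ ℓ i)
      (fun ℓ => if dσ ℓ < n then 0 else dσ ℓ) ∧
    CondLe
      (fun ℓ i => if dσ ℓ < n ∧ i < dσ ℓ then g (dσ ℓ) i else σ ℓ i)
      (fun ℓ => if dσ ℓ < n then 0 else dσ ℓ)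
      σ dσ := by
  obtain ⟨hle, hIm⟩ := hσ
  obtain ⟨hemp, hsub, hun⟩ := hI
  have hlt : ∀ k, {ℓ | dσ ℓ < k} ∈ I := by
    intro k
    induction k with
    | zero => simpa using hemp
    | succ k ih =>
      have : {ℓ | dσ ℓ < k + 1} = {ℓ | dσ ℓ < k} ∪ {ℓ | dσ ℓ = k} := by
        ext ℓ; simp [Nat.lt_succ_iff_lt_or_eq, Nat.le_iff_lt_or_eq]
      rw [this]; exact hun _ _ ih (hIm k)
  refine ⟨⟨fun ℓ => ?_, fun m => ?_⟩, fun ℓ => ⟨?_, ?_⟩, ⟨fun k => if k < n then 0 else k,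
    fun k => by dsimp only; split <;> omega, fun ℓ => rfl⟩, fun a b hab i hi1 hi2 => ?_⟩
  · have := hle ℓ; dsimp only; split <;> omega
  · rcases Nat.eq_zero_or_pos m with rfl | hm
    · refine hsub _ ({ℓ | dσ ℓ < n} ∪ {ℓ | dσ ℓ = 0}) ?_ (hun _ _ (hlt n) (hIm 0))
      intro ℓ hℓ
      simp only [Set.mem_setOf_eq] at hℓ
      by_cases h : dσ ℓ < n
      · exact Or.inl h
      · right; simpa [h] using hℓ
    · refine hsub _ {ℓ | dσ ℓ = m} ?_ (hIm m)
      intro ℓ hℓ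
      simp only [Set.mem_setOf_eq] at hℓ ⊢
      by_cases h : dσ ℓ < n
      · simp [h] at hℓ; omega
      · simpa [h] using hℓ
  · have := hle ℓ; dsimp only; split <;> omega
  · intro i hi1 hi2
    dsimp only
    rw [if_neg (by omega)]
  · have ha : dσ a < n := by
      by_contra h
      simp only [if_neg h] at hi1; omega
    have hb : dσ b < n := hab ▸ ha
    dsimp only
    rw [if_pos ⟨ha, hi2⟩, if_pos ⟨hb, by omega⟩, hab]
end

section
/- Suppose (τ, d_τ) is a condition of ℙ(I), N ∈ ℕ, A = ran(d_τ) ∩ [0, N), and D is a dense subset of ℙ(I). Then there exist a condition (σ, d_σ) with σ ≤_A τ, a set W ⊆ D with |W| ≤ 2^(|A|·max(A)) (with the convention max(∅) = 0), and a map ⃗g assigning to each ℓ ∈ d_σ⁻¹({N}) a function ⃗g(ℓ) : [0, N) → 2, such that the amalgamation σ[⃗g] (taken with S = {N}) is a condition of ℙ(I), σ[⃗g] ≤ τ, and W is predense below σ[⃗g]. -/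
/-- A condition is a pair `(σ, d)` with `σ : ℕ → ℕ → Bool` and `d : ℕ → ℕ`. -/
abbrev Cond : Type := (ℕ → ℕ → Bool) × (ℕ → ℕ)

/-- `σ ≤ₐ τ` : `σ ≤ τ` and the fibres of `dσ` and `dτ` over every `i ∈ a` agree. -/
def CondLeA (σ : ℕ → ℕ → Bool) (dσ : ℕ → ℕ) (τ : ℕ → ℕ → Bool) (dτ : ℕ → ℕ)
    (a : Set ℕ) : Prop :=
  CondLe σ dσ τ dτ ∧ ∀ i ∈ a, {m | dσ m = i} = {m | dτ m = i}

/-- `D` is a dense set of conditions of `ℙ(I)`. -/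
def IsDense (I : Set (Set ℕ)) (D : Set Cond) : Prop :=
  (∀ p ∈ D, IsCondition I p.1 p.2) ∧
  ∀ p : Cond, IsCondition I p.1 p.2 → ∃ q ∈ D, CondLe q.1 q.2 p.1 p.2

/-- Two conditions are compatible if they have a common extension. -/
def Compatible (I : Set (Set ℕ)) (p q : Cond) : Prop :=
  ∃ r : Cond, IsCondition I r.1 r.2 ∧ CondLe r.1 r.2 p.1 p.2 ∧ CondLe r.1 r.2 q.1 q.2

/-- `W` is predense below the condition `p`. -/
def PredenseBelow (I : Set (Set ℕ)) (W : Set Cond) (p : Cond) : Prop :=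
  ∀ q : Cond, IsCondition I q.1 q.2 → CondLe q.1 q.2 p.1 p.2 →
    ∃ w ∈ W, Compatible I q w

-- The amalgamation `σ[⃗g]` of a condition `(σ, dσ)` along `S ⊆ ℕ` with
-- `⃗g` assigning to each `ℓ ∈ dσ⁻¹(S)` a function `⃗g ℓ : [0, dσ ℓ) → 2`.
open Classical in
noncomputable def amalg (σ : ℕ → ℕ → Bool) (dσ : ℕ → ℕ) (S : Set ℕ)
    (g : ℕ → ℕ → Bool) : Cond :=
  (fun ℓ i => if dσ ℓ ∈ S ∧ i < dσ ℓ then g ℓ i else σ ℓ i,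
   fun ℓ => if dσ ℓ ∈ S then 0 else dσ ℓ)

/-! ### auxiliary lemmas -/

lemma ideal_mem_of_subset {I : Set (Set ℕ)} (hI : IsIdeal I) {A B : Set ℕ}
    (h : A ⊆ B) (hB : B ∈ I) : A ∈ I := hI.2.1 A B h hB

lemma ideal_fibers_le {I : Set (Set ℕ)} (hI : IsIdeal I) {d : ℕ → ℕ}
    (hd : ∀ n, {m | d m = n} ∈ I) : ∀ k, {m | d m ≤ k} ∈ I := by
  intro k
  induction k with
  | zero =>
    refine ideal_mem_of_subset hI (fun m hm => ?_) (hd 0)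
    simpa using Nat.le_zero.mp hm
  | succ k ih =>
    refine ideal_mem_of_subset hI (fun m hm => ?_) (hI.2.2 _ _ ih (hd (k+1)))
    rcases Nat.lt_or_ge (d m) (k+1) with h' | h'
    · exact Or.inl (Nat.lt_succ_iff.mp h')
    · exact Or.inr (Nat.le_antisymm hm h')

lemma condle_refl (σ : ℕ → ℕ → Bool) (d : ℕ → ℕ) : CondLe σ d σ d := by
  refine ⟨fun n => ⟨le_rfl, fun i _ _ => rfl⟩, ⟨id, fun n => le_rfl, fun n => rfl⟩,
    fun n m _ i h1 h2 => absurd (lt_of_le_of_lt h1 h2) (lt_irrefl _)⟩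

lemma condle_trans {σ1 d1 σ2 d2 σ3 d3} (h12 : CondLe σ1 d1 σ2 d2)
    (h23 : CondLe σ2 d2 σ3 d3) (hd3 : ∀ n, d3 n ≤ n) : CondLe σ1 d1 σ3 d3 := by
  obtain ⟨a12, ⟨e12, he12, hde12⟩, c12⟩ := h12
  obtain ⟨a23, ⟨e23, he23, hde23⟩, c23⟩ := h23
  refine ⟨fun n => ⟨le_trans (a12 n).1 (a23 n).1, fun i hi hin => ?_⟩,
    ⟨fun x => e12 (e23 x), fun n => le_trans (he12 _) (he23 n), fun n => by
      rw [hde12, hde23]⟩, fun n m hnm i hi hilt => ?_⟩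
  · rw [(a12 n).2 i (le_trans (a23 n).1 hi) hin, (a23 n).2 i hi hin]
  · -- clause 3
    have hd2nm : d2 n = d2 m := by rw [hde23 n, hde23 m, hnm]
    rcases Nat.lt_or_ge i (d2 n) with hlt | hge
    · exact c12 n m hd2nm i hi hlt
    · have hin : i < n := lt_of_lt_of_le hilt (hd3 n)
      have him : i < m := lt_of_lt_of_le (by rw [← hnm]; exact hilt) (hd3 m)
      rw [(a12 n).2 i hge hin, c23 n m hnm i hge hilt,
        ← (a12 m).2 i (by rw [← hd2nm]; exact hge) him]

/-! ### Strong extension relation used in the recursion -/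

def Strong (N : ℕ) (σ : ℕ → ℕ → Bool) (d : ℕ → ℕ) (g : ℕ → ℕ → Bool)
    (σ0 : ℕ → ℕ → Bool) (d0 : ℕ → ℕ) (g0 : ℕ → ℕ → Bool) : Prop :=
  ∃ ψ : ℕ → ℕ,
    (∀ x, ψ x ≤ x) ∧ (∀ x, x ≤ N → ψ x = x) ∧ (∀ x, N < x → N ≤ ψ x) ∧
    (∀ ℓ, d ℓ = ψ (d0 ℓ)) ∧
    (∀ ℓ i, d0 ℓ ≤ i → i < ℓ → σ ℓ i = σ0 ℓ i) ∧
    (∀ ℓ, d0 ℓ = N → ∀ i, i < N → g ℓ i = g0 ℓ i) ∧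
    (∀ n m, d0 n = d0 m → N < d0 n → ∀ i, d n ≤ i → i < d0 n → σ n i = σ m i) ∧
    (∀ n m, d0 n = d0 m → N < d0 n → d n = N → ∀ i, i < N → g n i = g m i)

lemma strong_refl (N : ℕ) (σ : ℕ → ℕ → Bool) (d : ℕ → ℕ) (g : ℕ → ℕ → Bool) :
    Strong N σ d g σ d g := by
  refine ⟨id, fun x => le_rfl, fun x _ => rfl, fun x h => le_of_lt h, fun ℓ => rfl,
    fun ℓ i _ _ => rfl, fun ℓ _ i _ => rfl,
    fun n m _ _ i hi hilt => absurd (lt_of_le_of_lt hi hilt) (lt_irrefl _), ?_⟩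
  intro n m _ hN hdn i hiN
  rw [hdn] at hN; exact absurd hN (lt_irrefl _)

lemma strong_d_le {N σ d g σ0 d0 g0} (h : Strong N σ d g σ0 d0 g0) :
    ∀ ℓ, d ℓ ≤ d0 ℓ := by
  obtain ⟨ψ, hle, _, _, hd, _⟩ := h
  intro ℓ; rw [hd ℓ]; exact hle _

lemma strong_trans {N σ2 d2 g2 σ1 d1 g1 σ0 d0 g0} (hd0 : ∀ n, d0 n ≤ n)
    (h21 : Strong N σ2 d2 g2 σ1 d1 g1) (h10 : Strong N σ1 d1 g1 σ0 d0 g0) :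
    Strong N σ2 d2 g2 σ0 d0 g0 := by
  obtain ⟨ψ2, hψ2le, hψ2low, hψ2hi, hd2, hb2, hc2, hd2', he2⟩ := h21
  obtain ⟨ψ1, hψ1le, hψ1low, hψ1hi, hd1, hb1, hc1, hd1', he1⟩ := h10
  refine ⟨fun x => ψ2 (ψ1 x), fun x => le_trans (hψ2le _) (hψ1le x),
    fun x hx => by show ψ2 (ψ1 x) = x; rw [hψ1low x hx, hψ2low x hx],
    fun x hx => ?_, fun ℓ => by show d2 ℓ = ψ2 (ψ1 (d0 ℓ)); rw [hd2 ℓ, hd1 ℓ], ?_, ?_, ?_, ?_⟩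
  · show N ≤ ψ2 (ψ1 x)
    rcases Nat.lt_or_ge N (ψ1 x) with h | h
    · exact hψ2hi _ h
    · have h' : ψ1 x = N := le_antisymm h (hψ1hi x hx)
      rw [h', hψ2low N le_rfl]
  · -- (b)
    intro ℓ i hi hiℓ
    have h1 : d1 ℓ ≤ i := le_trans (by rw [hd1 ℓ]; exact hψ1le _) hi
    rw [hb2 ℓ i h1 hiℓ, hb1 ℓ i hi hiℓ]
  · -- (c)
    intro ℓ hℓ i hiN
    have h1 : d1 ℓ = N := by rw [hd1 ℓ, hℓ, hψ1low N le_rfl]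
    rw [hc2 ℓ h1 i hiN, hc1 ℓ hℓ i hiN]
  · -- (d)
    intro n m hnm hN i hi hilt
    have hd1nm : d1 n = d1 m := by rw [hd1 n, hd1 m, hnm]
    have hd1nN : N ≤ d1 n := by rw [hd1 n]; exact hψ1hi _ hN
    rcases Nat.lt_or_ge i (d1 n) with hlt1 | hge1
    · -- i < d1 n : use (d) of the second step, fiber d1 n
      have hNd1 : N < d1 n := by
        rcases lt_or_eq_of_le hd1nN with h | h
        · exact h
        · exfalso
          have h2 : d2 n = N := by rw [hd2 n, ← h, hψ2low _ le_rfl]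
          omega
      exact hd2' n m hd1nm hNd1 i hi hlt1
    · -- i ≥ d1 n : values are stable from level 1, use (d) of first step
      have hn : i < n := lt_of_lt_of_le hilt (hd0 n)
      have hm : i < m := lt_of_lt_of_le (hnm ▸ hilt) (hd0 m)
      rw [hb2 n i hge1 hn, hb2 m i (hd1nm ▸ hge1) hm]
      exact hd1' n m hnm hN i hge1 hilt
  · -- (e)
    intro n m hnm hN hdn i hiN
    have hd1nm : d1 n = d1 m := by rw [hd1 n, hd1 m, hnm]
    have hd1nN : N ≤ d1 n := by rw [hd1 n]; exact hψ1hi _ hN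
    rcases lt_or_eq_of_le hd1nN with h | h
    · exact he2 n m hd1nm h hdn i hiN
    · rw [hc2 n h.symm i hiN, hc2 m (hd1nm ▸ h.symm) i hiN]
      exact he1 n m hnm hN (h.symm) i hiN


/-! ### step data -/

def Collapse (N : ℕ) (σA : ℕ → ℕ → Bool) (dA : ℕ → ℕ) (gA h : ℕ → ℕ → Bool) : Cond :=
  (fun ℓ i => if dA ℓ ≤ N ∧ i < dA ℓ then (if dA ℓ = N then gA ℓ i else h (dA ℓ) i) else σA ℓ i,
   fun ℓ => if dA ℓ ≤ N then 0 else dA ℓ)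

def StepD (N : ℕ) (e' : ℕ → ℕ) (dA : ℕ → ℕ) : ℕ → ℕ :=
  fun ℓ => if dA ℓ ≤ N then dA ℓ else if e' (dA ℓ) < N then N else e' (dA ℓ)

def StepS (N : ℕ) (π σA : ℕ → ℕ → Bool) (dA : ℕ → ℕ) : ℕ → ℕ → Bool :=
  fun ℓ i => if dA ℓ ≤ N then σA ℓ i else π ℓ i

def StepG (N : ℕ) (e' : ℕ → ℕ) (π : ℕ → ℕ → Bool) (dA : ℕ → ℕ) (gA : ℕ → ℕ → Bool) :
    ℕ → ℕ → Bool :=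
  fun ℓ i => if N < dA ℓ ∧ e' (dA ℓ) ≤ N then (if e' (dA ℓ) ≤ i then π ℓ i else false) else gA ℓ i

lemma amalg_d (σ : ℕ → ℕ → Bool) (d : ℕ → ℕ) (N : ℕ) (g : ℕ → ℕ → Bool) (ℓ : ℕ) :
    (amalg σ d {N} g).2 ℓ = if d ℓ = N then 0 else d ℓ := by
  simp [amalg]

lemma amalg_s (σ : ℕ → ℕ → Bool) (d : ℕ → ℕ) (N : ℕ) (g : ℕ → ℕ → Bool) (ℓ i : ℕ) :
    (amalg σ d {N} g).1 ℓ i = if d ℓ = N ∧ i < d ℓ then g ℓ i else σ ℓ i := by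
  simp [amalg]


open Classical in
noncomputable def Rd (N : ℕ) (e_q dq : ℕ → ℕ) : ℕ → ℕ :=
  fun ℓ => if dq ℓ = 0 ∨ ∃ x, x < N ∧ e_q x = dq ℓ then 0 else dq ℓ

def Rsig (N : ℕ) (ρ h : ℕ → ℕ → Bool) (dq d' : ℕ → ℕ) : ℕ → ℕ → Bool :=
  fun ℓ i => if dq ℓ ≤ i then ρ ℓ i else if d' ℓ < N ∧ i < d' ℓ then h (d' ℓ) i else false

lemma Rd_eq (N : ℕ) (e_q dq : ℕ → ℕ) (ℓ : ℕ) :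
    Rd N e_q dq ℓ = if dq ℓ = 0 ∨ ∃ x, x < N ∧ e_q x = dq ℓ then 0 else dq ℓ := by
  simp [Rd]

lemma Rsig_eq (N : ℕ) (ρ h : ℕ → ℕ → Bool) (dq d' : ℕ → ℕ) (ℓ i : ℕ) :
    Rsig N ρ h dq d' ℓ i = if dq ℓ ≤ i then ρ ℓ i
      else if d' ℓ < N ∧ i < d' ℓ then h (d' ℓ) i else false := rfl

/-- The key compatibility construction. -/
lemma compat_main {I : Set (Set ℕ)} (hI : IsIdeal I) (N : ℕ)
    (σA : ℕ → ℕ → Bool) (dA : ℕ → ℕ) (gA : ℕ → ℕ → Bool) (hdA : ∀ n, dA n ≤ n)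
    (h : ℕ → ℕ → Bool) (π : ℕ → ℕ → Bool) (dπ : ℕ → ℕ)
    (hwle : CondLe π dπ (Collapse N σA dA gA h).1 (Collapse N σA dA gA h).2)
    (e' : ℕ → ℕ) (he'le : ∀ x, e' x ≤ x)
    (he' : ∀ ℓ, dπ ℓ = e' ((Collapse N σA dA gA h).2 ℓ))
    (σ : ℕ → ℕ → Bool) (d : ℕ → ℕ) (g : ℕ → ℕ → Bool)
    (hS : Strong N σ d g (StepS N π σA dA) (StepD N e' dA) (StepG N e' π dA gA))
    (ρ : ℕ → ℕ → Bool) (dq : ℕ → ℕ) (hqc : IsCondition I ρ dq)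
    (hqle : CondLe ρ dq (amalg σ d {N} g).1 (amalg σ d {N} g).2)
    (hmatch : ∀ ℓ, (amalg σ d {N} g).2 ℓ < N → ∀ i, i < (amalg σ d {N} g).2 ℓ →
      h ((amalg σ d {N} g).2 ℓ) i = if dq ℓ ≤ i then ρ ℓ i else false) :
    Compatible I (ρ, dq) (π, dπ) := by
  classical
  obtain ⟨hw1, _, hw3⟩ := hwle
  obtain ⟨hq1, ⟨e_q, heqle, heq⟩, hq3⟩ := hqle
  obtain ⟨ψ, hψle, hψlow, hψhi, hψd, hSb, hSc, hSe, hSg⟩ := hS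
  set σ' : ℕ → ℕ → Bool := (amalg σ d {N} g).1 with hσ'def
  set d' : ℕ → ℕ := (amalg σ d {N} g).2 with hd'def
  have hd' : ∀ ℓ, d' ℓ = if d ℓ = N then 0 else d ℓ := amalg_d σ d N g
  have hσ' : ∀ ℓ i, σ' ℓ i = if d ℓ = N ∧ i < d ℓ then g ℓ i else σ ℓ i := amalg_s σ d N g
  have hσ'hi : ∀ ℓ i, d ℓ ≤ i → σ' ℓ i = σ ℓ i := by
    intro ℓ i hi; rw [hσ' ℓ i, if_neg]; rintro ⟨-, hlt⟩; omega
  have hσ'g : ∀ ℓ i, d ℓ = N → i < N → σ' ℓ i = g ℓ i := by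
    intro ℓ i h1 h2; rw [hσ' ℓ i, if_pos ⟨h1, by omega⟩]
  have hdB : ∀ ℓ, StepD N e' dA ℓ = if dA ℓ ≤ N then dA ℓ else if e' (dA ℓ) < N then N else e' (dA ℓ) := fun ℓ => rfl
  have hσB : ∀ ℓ i, StepS N π σA dA ℓ i = if dA ℓ ≤ N then σA ℓ i else π ℓ i := fun ℓ i => rfl
  have hgB : ∀ ℓ i, StepG N e' π dA gA ℓ i =
      if N < dA ℓ ∧ e' (dA ℓ) ≤ N then (if e' (dA ℓ) ≤ i then π ℓ i else false) else gA ℓ i := fun ℓ i => rfl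
  have hcd : ∀ ℓ, (Collapse N σA dA gA h).2 ℓ = if dA ℓ ≤ N then 0 else dA ℓ := fun ℓ => rfl
  have hcs : ∀ ℓ i, (Collapse N σA dA gA h).1 ℓ i =
      if dA ℓ ≤ N ∧ i < dA ℓ then (if dA ℓ = N then gA ℓ i else h (dA ℓ) i) else σA ℓ i := fun ℓ i => rfl
  have hdBle : ∀ ℓ, StepD N e' dA ℓ ≤ dA ℓ := by
    intro ℓ; rw [hdB ℓ]; split_ifs with h1 h2
    · exact le_rfl
    · omega
    · exact he'le _
  have hdle : ∀ ℓ, d ℓ ≤ dA ℓ := fun ℓ => le_trans (by rw [hψd ℓ]; exact hψle _) (hdBle ℓ)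
  have hd'le : ∀ ℓ, d' ℓ ≤ d ℓ := by intro ℓ; rw [hd' ℓ]; split_ifs <;> omega
  have hdqle : ∀ ℓ, dq ℓ ≤ d' ℓ := fun ℓ => (hq1 ℓ).1
  have heq0 : e_q 0 = 0 := Nat.le_zero.mp (heqle 0)
  -- case facts
  have caseLow : ∀ ℓ, dA ℓ < N → d ℓ = dA ℓ ∧ d' ℓ = dA ℓ ∧ dq ℓ = e_q (dA ℓ) ∧ dπ ℓ = 0 := by
    intro ℓ hℓ
    have h1 : StepD N e' dA ℓ = dA ℓ := by rw [hdB ℓ, if_pos (le_of_lt hℓ)]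
    have h2 : d ℓ = dA ℓ := by rw [hψd ℓ, h1, hψlow _ (le_of_lt hℓ)]
    have h3 : d' ℓ = dA ℓ := by rw [hd' ℓ, h2, if_neg (by omega)]
    refine ⟨h2, h3, by rw [heq ℓ, h3], ?_⟩
    rw [he' ℓ, hcd ℓ, if_pos (le_of_lt hℓ)]
    exact Nat.le_zero.mp (he'le 0)
  have caseN : ∀ ℓ, dA ℓ = N → d ℓ = N ∧ d' ℓ = 0 ∧ dq ℓ = 0 ∧ dπ ℓ = 0 ∧ StepD N e' dA ℓ = N := by
    intro ℓ hℓ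
    have h1 : StepD N e' dA ℓ = N := by rw [hdB ℓ, if_pos (le_of_eq hℓ), hℓ]
    have h2 : d ℓ = N := by rw [hψd ℓ, h1, hψlow _ le_rfl]
    have h3 : d' ℓ = 0 := by rw [hd' ℓ, if_pos h2]
    refine ⟨h2, h3, by rw [heq ℓ, h3, heq0], ?_, h1⟩
    rw [he' ℓ, hcd ℓ, if_pos (le_of_eq hℓ)]
    exact Nat.le_zero.mp (he'le 0)
  have caseCol : ∀ ℓ, N < dA ℓ → e' (dA ℓ) ≤ N →
      d ℓ = N ∧ d' ℓ = 0 ∧ dq ℓ = 0 ∧ dπ ℓ = e' (dA ℓ) ∧ StepD N e' dA ℓ = N := by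
    intro ℓ hℓ he
    have h1 : StepD N e' dA ℓ = N := by
      rw [hdB ℓ, if_neg (by omega)]
      rcases lt_or_eq_of_le he with h' | h'
      · rw [if_pos h']
      · rw [if_neg (by omega), h']
    have h2 : d ℓ = N := by rw [hψd ℓ, h1, hψlow _ le_rfl]
    have h3 : d' ℓ = 0 := by rw [hd' ℓ, if_pos h2]
    refine ⟨h2, h3, by rw [heq ℓ, h3, heq0], ?_, h1⟩
    rw [he' ℓ, hcd ℓ, if_neg (by omega)]
  have caseHi : ∀ ℓ, N < dA ℓ → N < e' (dA ℓ) →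
      StepD N e' dA ℓ = e' (dA ℓ) ∧ dπ ℓ = StepD N e' dA ℓ ∧ N ≤ d ℓ := by
    intro ℓ hℓ he
    have h1 : StepD N e' dA ℓ = e' (dA ℓ) := by rw [hdB ℓ, if_neg (by omega), if_neg (by omega)]
    refine ⟨h1, ?_, ?_⟩
    · rw [he' ℓ, hcd ℓ, if_neg (by omega), h1]
    · rw [hψd ℓ, h1]; exact hψhi _ he
  -- auxiliary facts about Rd
  have hRd0 : ∀ ℓ, dq ℓ = 0 → Rd N e_q dq ℓ = 0 := by
    intro ℓ hℓ; rw [Rd_eq, if_pos (Or.inl hℓ)]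
  have hRdlow : ∀ ℓ, dA ℓ < N → Rd N e_q dq ℓ = 0 := by
    intro ℓ hℓ
    obtain ⟨-, -, h3, -⟩ := caseLow ℓ hℓ
    rw [Rd_eq, if_pos (Or.inr ⟨dA ℓ, hℓ, h3.symm⟩)]
  have hRdle : ∀ ℓ, Rd N e_q dq ℓ ≤ dq ℓ := by
    intro ℓ; rw [Rd_eq]; split_ifs <;> omega
  -- the common extension r
  refine ⟨(Rsig N ρ h dq d', Rd N e_q dq), ⟨?_, ?_⟩, ?_, ?_⟩
  · -- d_r ≤ id
    intro ℓ; exact le_trans (hRdle ℓ) (hqc.1 ℓ)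
  · -- fibers of d_r
    show ∀ j, {m | Rd N e_q dq m = j} ∈ I
    intro j
    rcases Nat.eq_zero_or_pos j with rfl | hj
    · refine ideal_mem_of_subset hI ?_ (ideal_fibers_le hI hqc.2 N)
      intro m hm
      simp only [Set.mem_setOf_eq, Rd_eq] at hm ⊢
      by_cases hP : dq m = 0 ∨ ∃ x, x < N ∧ e_q x = dq m
      · rcases hP with h1 | ⟨x, hx, h2⟩
        · omega
        · have := heqle x; omega
      · rw [if_neg hP] at hm
        exact absurd (Or.inl hm) hP
    · refine ideal_mem_of_subset hI ?_ (hqc.2 j)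
      intro m hm
      simp only [Set.mem_setOf_eq, Rd_eq] at hm ⊢
      by_cases hP : dq m = 0 ∨ ∃ x, x < N ∧ e_q x = dq m
      · rw [if_pos hP] at hm; omega
      · rwa [if_neg hP] at hm
  · -- r ≤ q
    show CondLe (Rsig N ρ h dq d') (Rd N e_q dq) ρ dq
    refine ⟨fun n => ⟨hRdle n, fun i hi _ => by rw [Rsig_eq, if_pos hi]⟩,
      ⟨fun v => if v = 0 ∨ ∃ x, x < N ∧ e_q x = v then 0 else v, ?_, fun n => by
        rw [Rd_eq]⟩, ?_⟩
    · intro v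
      show (if v = 0 ∨ ∃ x, x < N ∧ e_q x = v then 0 else v) ≤ v
      split_ifs
      · exact Nat.zero_le _
      · exact le_rfl
    · intro n m hnm i hi hilt
      have hP : dq n = 0 ∨ ∃ x, x < N ∧ e_q x = dq n := by
        by_contra hP
        rw [Rd_eq, if_neg hP] at hi; omega
      have hfalse : ∀ ℓ', dq ℓ' = dq n → Rsig N ρ h dq d' ℓ' i = false := by
        intro ℓ' hℓ'
        rw [Rsig_eq, if_neg (by omega)]
        split_ifs with h2
        · rw [hmatch ℓ' h2.1 i h2.2, if_neg (by omega)]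
        · rfl
      rw [hfalse n rfl, hfalse m hnm.symm]
  · -- r ≤ w : the main verification
    show CondLe (Rsig N ρ h dq d') (Rd N e_q dq) π dπ
    refine ⟨fun ℓ => ⟨?_, fun i hi hiℓ => ?_⟩,
      ⟨fun u => if u ≤ N then 0
        else if e_q (if ψ u = N then 0 else ψ u) = 0 ∨
            ∃ x, x < N ∧ e_q x = e_q (if ψ u = N then 0 else ψ u) then 0
          else e_q (if ψ u = N then 0 else ψ u), ?_, ?_⟩,
      ?_⟩
    · -- clause 1, inequality
      rcases lt_trichotomy (dA ℓ) N with hA | hA | hA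
      · rw [hRdlow ℓ hA]; exact Nat.zero_le _
      · rw [hRd0 ℓ (caseN ℓ hA).2.2.1]; exact Nat.zero_le _
      · rcases le_or_gt (e' (dA ℓ)) N with hE | hE
        · rw [hRd0 ℓ (caseCol ℓ hA hE).2.2.1]; exact Nat.zero_le _
        · obtain ⟨h1, h2, h3⟩ := caseHi ℓ hA hE
          calc Rd N e_q dq ℓ ≤ dq ℓ := hRdle ℓ
            _ ≤ d' ℓ := hdqle ℓ
            _ ≤ d ℓ := hd'le ℓ
            _ ≤ StepD N e' dA ℓ := by rw [hψd ℓ]; exact hψle _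
            _ = dπ ℓ := h2.symm
    · -- clause 1, values : Rsig ℓ i = π ℓ i for dπ ℓ ≤ i < ℓ
      have hπc : π ℓ i = (Collapse N σA dA gA h).1 ℓ i → Rsig N ρ h dq d' ℓ i = (Collapse N σA dA gA h).1 ℓ i → Rsig N ρ h dq d' ℓ i = π ℓ i := by
        intro a b; rw [a, b]
      rcases lt_trichotomy (dA ℓ) N with hA | hA | hA
      · -- low case
        obtain ⟨hdℓ, hd'ℓ, hdqℓ, hdπℓ⟩ := caseLow ℓ hA
        have hπi : π ℓ i = (Collapse N σA dA gA h).1 ℓ i :=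
          (hw1 ℓ).2 i (by rw [hcd ℓ, if_pos (le_of_lt hA)]; exact Nat.zero_le _) hiℓ
        rcases Nat.lt_or_ge i (dA ℓ) with hik | hik
        · -- i < dA ℓ : both sides are h (dA ℓ) i
          have hcol : (Collapse N σA dA gA h).1 ℓ i = h (dA ℓ) i := by
            rw [hcs ℓ i, if_pos ⟨le_of_lt hA, hik⟩, if_neg (by omega)]
          have hmm : h (dA ℓ) i = if dq ℓ ≤ i then ρ ℓ i else false := by
            have := hmatch ℓ (by omega : d' ℓ < N) i (by omega : i < d' ℓ)
            rwa [hd'ℓ] at this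
          rw [hπi, hcol, hmm, Rsig_eq]
          by_cases hdqi : dq ℓ ≤ i
          · rw [if_pos hdqi, if_pos hdqi]
          · rw [if_neg hdqi, if_neg hdqi, if_pos ⟨by omega, by omega⟩, hd'ℓ, hmm,
              if_neg hdqi]
        · -- i ≥ dA ℓ
          have h1 : Rsig N ρ h dq d' ℓ i = ρ ℓ i := by
            rw [Rsig_eq, if_pos (by have := heqle (dA ℓ); omega)]
          have h2 : ρ ℓ i = σ' ℓ i := (hq1 ℓ).2 i (by omega) hiℓ
          have h3 : σ' ℓ i = σ ℓ i := hσ'hi ℓ i (by omega)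
          have hdBℓ : StepD N e' dA ℓ = dA ℓ := by rw [hdB ℓ, if_pos (le_of_lt hA)]
          have h4 : σ ℓ i = StepS N π σA dA ℓ i := hSb ℓ i (by omega) hiℓ
          have h5 : StepS N π σA dA ℓ i = σA ℓ i := by rw [hσB, if_pos (le_of_lt hA)]
          have h6 : (Collapse N σA dA gA h).1 ℓ i = σA ℓ i := by
            rw [hcs ℓ i, if_neg (by omega)]
          rw [h1, h2, h3, h4, h5, hπi, h6]
      · -- dA ℓ = N
        obtain ⟨hdℓ, hd'ℓ, hdqℓ, hdπℓ, hdBℓ⟩ := caseN ℓ hA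
        have hπi : π ℓ i = (Collapse N σA dA gA h).1 ℓ i :=
          (hw1 ℓ).2 i (by rw [hcd ℓ, if_pos (le_of_eq hA)]; exact Nat.zero_le _) hiℓ
        have h1 : Rsig N ρ h dq d' ℓ i = ρ ℓ i := by rw [Rsig_eq, if_pos (by omega)]
        have h2 : ρ ℓ i = σ' ℓ i := (hq1 ℓ).2 i (by omega) hiℓ
        rcases Nat.lt_or_ge i N with hiN | hiN
        · have h3 : σ' ℓ i = g ℓ i := hσ'g ℓ i hdℓ hiN
          have h4 : g ℓ i = StepG N e' π dA gA ℓ i := hSc ℓ hdBℓ i hiN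
          have h5 : StepG N e' π dA gA ℓ i = gA ℓ i := by rw [hgB, if_neg (by omega)]
          have h6 : (Collapse N σA dA gA h).1 ℓ i = gA ℓ i := by
            rw [hcs ℓ i, if_pos ⟨le_of_eq hA, by omega⟩, if_pos hA]
          rw [h1, h2, h3, h4, h5, hπi, h6]
        · have h3 : σ' ℓ i = σ ℓ i := hσ'hi ℓ i (by omega)
          have h4 : σ ℓ i = StepS N π σA dA ℓ i := hSb ℓ i (by omega) hiℓ
          have h5 : StepS N π σA dA ℓ i = σA ℓ i := by rw [hσB, if_pos (le_of_eq hA)]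
          have h6 : (Collapse N σA dA gA h).1 ℓ i = σA ℓ i := by
            rw [hcs ℓ i, if_neg (by omega)]
          rw [h1, h2, h3, h4, h5, hπi, h6]
      · rcases le_or_gt (e' (dA ℓ)) N with hE | hE
        · -- collision case
          obtain ⟨hdℓ, hd'ℓ, hdqℓ, hdπℓ, hdBℓ⟩ := caseCol ℓ hA hE
          have h1 : Rsig N ρ h dq d' ℓ i = ρ ℓ i := by rw [Rsig_eq, if_pos (by omega)]
          have h2 : ρ ℓ i = σ' ℓ i := (hq1 ℓ).2 i (by omega) hiℓ
          rcases Nat.lt_or_ge i N with hiN | hiN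
          · have h3 : σ' ℓ i = g ℓ i := hσ'g ℓ i hdℓ hiN
            have h4 : g ℓ i = StepG N e' π dA gA ℓ i := hSc ℓ hdBℓ i hiN
            have h5 : StepG N e' π dA gA ℓ i = π ℓ i := by
              rw [hgB, if_pos ⟨hA, hE⟩, if_pos (by omega)]
            rw [h1, h2, h3, h4, h5]
          · have h3 : σ' ℓ i = σ ℓ i := hσ'hi ℓ i (by omega)
            have h4 : σ ℓ i = StepS N π σA dA ℓ i := hSb ℓ i (by omega) hiℓ
            have h5 : StepS N π σA dA ℓ i = π ℓ i := by rw [hσB, if_neg (by omega)]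
            rw [h1, h2, h3, h4, h5]
        · -- high case
          obtain ⟨hdBℓ, hdπℓ, hdN⟩ := caseHi ℓ hA hE
          have hiB : StepD N e' dA ℓ ≤ i := by omega
          have hdi : d ℓ ≤ i := le_trans (by rw [hψd ℓ]; exact hψle _) hiB
          have h1 : Rsig N ρ h dq d' ℓ i = ρ ℓ i := by
            rw [Rsig_eq, if_pos (by have := hdqle ℓ; have := hd'le ℓ; omega)]
          have h2 : ρ ℓ i = σ' ℓ i := (hq1 ℓ).2 i (by have := hd'le ℓ; omega) hiℓ
          have h3 : σ' ℓ i = σ ℓ i := hσ'hi ℓ i hdi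
          have h4 : σ ℓ i = StepS N π σA dA ℓ i := hSb ℓ i hiB hiℓ
          have h5 : StepS N π σA dA ℓ i = π ℓ i := by rw [hσB, if_neg (by omega)]
          rw [h1, h2, h3, h4, h5]
    · -- clause 2 : the bound on e''
      intro u
      show (if u ≤ N then 0
        else if e_q (if ψ u = N then 0 else ψ u) = 0 ∨
            ∃ x, x < N ∧ e_q x = e_q (if ψ u = N then 0 else ψ u) then 0
          else e_q (if ψ u = N then 0 else ψ u)) ≤ u
      by_cases h1 : u ≤ N
      · rw [if_pos h1]; exact Nat.zero_le _
      · rw [if_neg h1]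
        by_cases h2 : e_q (if ψ u = N then 0 else ψ u) = 0 ∨
            ∃ x, x < N ∧ e_q x = e_q (if ψ u = N then 0 else ψ u)
        · rw [if_pos h2]; exact Nat.zero_le _
        · rw [if_neg h2]
          have h5 : (if ψ u = N then 0 else ψ u) ≤ ψ u := by split_ifs <;> omega
          have h6 := heqle (if ψ u = N then 0 else ψ u)
          have h7 := hψle u
          omega
    · -- clause 2 : the equation
      intro ℓ
      show Rd N e_q dq ℓ = if dπ ℓ ≤ N then 0
        else if e_q (if ψ (dπ ℓ) = N then 0 else ψ (dπ ℓ)) = 0 ∨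
            ∃ x, x < N ∧ e_q x = e_q (if ψ (dπ ℓ) = N then 0 else ψ (dπ ℓ)) then 0
          else e_q (if ψ (dπ ℓ) = N then 0 else ψ (dπ ℓ))
      rcases le_or_gt (dπ ℓ) N with huN | huN
      · rw [if_pos huN]
        rcases lt_trichotomy (dA ℓ) N with hA | hA | hA
        · exact hRdlow ℓ hA
        · exact hRd0 ℓ (caseN ℓ hA).2.2.1
        · rcases le_or_gt (e' (dA ℓ)) N with hE | hE
          · exact hRd0 ℓ (caseCol ℓ hA hE).2.2.1
          · obtain ⟨h1, h2, h3⟩ := caseHi ℓ hA hE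
            omega
      · rw [if_neg (by omega)]
        -- necessarily the high case
        have hA : N < dA ℓ := by
          rcases lt_trichotomy (dA ℓ) N with hA | hA | hA
          · have := (caseLow ℓ hA).2.2.2; omega
          · have := (caseN ℓ hA).2.2.2.1; omega
          · exact hA
        have hE : N < e' (dA ℓ) := by
          rcases le_or_gt (e' (dA ℓ)) N with hE | hE
          · have := (caseCol ℓ hA hE).2.2.2.1; omega
          · exact hE
        obtain ⟨h1, h2, h3⟩ := caseHi ℓ hA hE
        have hx : ψ (dπ ℓ) = d ℓ := by rw [h2, ← hψd ℓ]
        rw [hx]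
        have hx2 : (if d ℓ = N then 0 else d ℓ) = d' ℓ := (hd' ℓ).symm
        rw [hx2, ← heq ℓ, Rd_eq]
    · -- clause 3
      intro n m hnm i hi hilt
      have hπn : 0 < dπ n := by omega
      have hAn : N < dA n := by
        rcases lt_trichotomy (dA n) N with hA | hA | hA
        · have := (caseLow n hA).2.2.2; omega
        · have := (caseN n hA).2.2.2.1; omega
        · exact hA
      have hAm : N < dA m := by
        rcases lt_trichotomy (dA m) N with hA | hA | hA
        · have := (caseLow m hA).2.2.2; omega
        · have := (caseN m hA).2.2.2.1; omega
        · exact hA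
      rcases le_or_gt (dπ n) N with huN | huN
      · -- u ≤ N : both collision type, both sides false
        have hfalse : ∀ ℓ', N < dA ℓ' → dπ ℓ' = dπ n → Rsig N ρ h dq d' ℓ' i = false := by
          intro ℓ' hA' hπ'
          have hE' : e' (dA ℓ') ≤ N := by
            rcases le_or_gt (e' (dA ℓ')) N with hE' | hE'
            · exact hE'
            · have := (caseHi ℓ' hA' hE').2.1
              have := (caseHi ℓ' hA' hE').1
              omega
          obtain ⟨hdℓ, hd'ℓ, hdqℓ, hdπℓ, hdBℓ⟩ := caseCol ℓ' hA' hE'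
          have hiℓ' : i < ℓ' := by have := hdA ℓ'; omega
          have h1 : Rsig N ρ h dq d' ℓ' i = ρ ℓ' i := by rw [Rsig_eq, if_pos (by omega)]
          have h2 : ρ ℓ' i = σ' ℓ' i := (hq1 ℓ').2 i (by omega) hiℓ'
          have h3 : σ' ℓ' i = g ℓ' i := hσ'g ℓ' i hdℓ (by omega)
          have h4 : g ℓ' i = StepG N e' π dA gA ℓ' i := hSc ℓ' hdBℓ i (by omega)
          have h5 : StepG N e' π dA gA ℓ' i = false := by
            rw [hgB, if_pos ⟨hA', hE'⟩, if_neg (by omega)]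
          rw [h1, h2, h3, h4, h5]
        rw [hfalse n hAn rfl, hfalse m hAm hnm.symm]
      · -- u > N : both high type
        have hEn : N < e' (dA n) := by
          rcases le_or_gt (e' (dA n)) N with hE | hE
          · have := (caseCol n hAn hE).2.2.2.1; omega
          · exact hE
        have hEm : N < e' (dA m) := by
          rcases le_or_gt (e' (dA m)) N with hE | hE
          · have := (caseCol m hAm hE).2.2.2.1; omega
          · exact hE
        obtain ⟨hBn, hπBn, hdNn⟩ := caseHi n hAn hEn
        obtain ⟨hBm, hπBm, hdNm⟩ := caseHi m hAm hEm
        have hBeq : StepD N e' dA n = StepD N e' dA m := by omega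
        have hdnm : d n = d m := by rw [hψd n, hψd m, hBeq]
        have hin : i < n := by have := hdA n; have := hdBle n; omega
        have him : i < m := by have := hdA m; have := hdBle m; omega
        have hNB : N < StepD N e' dA n := by omega
        rcases eq_or_lt_of_le hdNn with hdn | hdn
        · -- d n = N (enters the N-fiber later)
          have hdn' : d n = N := hdn.symm
          have hdm' : d m = N := by omega
          have hd'n : d' n = 0 := by rw [hd' n, if_pos hdn']
          have hd'm : d' m = 0 := by rw [hd' m, if_pos hdm']
          have hdqn : dq n = 0 := by rw [heq n, hd'n, heq0]
          have hdqm : dq m = 0 := by rw [heq m, hd'm, heq0]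
          have h1 : Rsig N ρ h dq d' n i = ρ n i := by rw [Rsig_eq, if_pos (by omega)]
          have h1m : Rsig N ρ h dq d' m i = ρ m i := by rw [Rsig_eq, if_pos (by omega)]
          have h2 : ρ n i = σ' n i := (hq1 n).2 i (by omega) hin
          have h2m : ρ m i = σ' m i := (hq1 m).2 i (by omega) him
          rcases Nat.lt_or_ge i N with hiN | hiN
          · have h3 : σ' n i = g n i := hσ'g n i hdn' hiN
            have h3m : σ' m i = g m i := hσ'g m i hdm' hiN
            have h4 : g n i = g m i := hSg n m hBeq hNB hdn' i hiN
            rw [h1, h2, h3, h4, ← h3m, ← h2m, ← h1m]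
          · have h3 : σ' n i = σ n i := hσ'hi n i (by omega)
            have h3m : σ' m i = σ m i := hσ'hi m i (by omega)
            have h4 : σ n i = σ m i := hSe n m hBeq hNB i (by omega) (by omega)
            rw [h1, h2, h3, h4, ← h3m, ← h2m, ← h1m]
        · -- N < d n
          have hdm : N < d m := by omega
          have hd'n : d' n = d n := by rw [hd' n, if_neg (by omega)]
          have hd'm : d' m = d m := by rw [hd' m, if_neg (by omega)]
          have hdqnm : dq n = dq m := by rw [heq n, heq m, hd'n, hd'm, hdnm]
          rcases Nat.lt_or_ge i (dq n) with hiv | hiv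
          · -- below dq : both sides false
            have hfalse : ∀ ℓ', dq ℓ' = dq n → d' ℓ' = d ℓ' → N < d ℓ' →
                Rsig N ρ h dq d' ℓ' i = false := by
              intro ℓ' h1' h2' h3'
              rw [Rsig_eq, if_neg (by omega), if_neg (by rintro ⟨a, -⟩; omega)]
            rw [hfalse n rfl hd'n hdn, hfalse m hdqnm.symm hd'm hdm]
          · have h1 : Rsig N ρ h dq d' n i = ρ n i := by rw [Rsig_eq, if_pos hiv]
            have h1m : Rsig N ρ h dq d' m i = ρ m i := by
              rw [Rsig_eq, if_pos (by omega)]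
            rcases Nat.lt_or_ge i (d n) with hid | hid
            · have := hq3 n m (by omega) i (by omega) (by omega)
              rw [h1, h1m, this]
            · have h2 : ρ n i = σ' n i := (hq1 n).2 i (by omega) hin
              have h2m : ρ m i = σ' m i := (hq1 m).2 i (by omega) him
              have h3 : σ' n i = σ n i := hσ'hi n i hid
              have h3m : σ' m i = σ m i := hσ'hi m i (by omega)
              have h4 : σ n i = σ m i := hSe n m hBeq hNB i hid (by omega)
              rw [h1, h2, h3, h4, ← h3m, ← h2m, ← h1m]

/-- The recursive construction over a list of patterns. -/
lemma main_aux {I : Set (Set ℕ)} (hI : IsIdeal I) {D : Set Cond} (hD : IsDense I D) (N : ℕ) :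
    ∀ (L : List (ℕ → ℕ → Bool)) (σA : ℕ → ℕ → Bool) (dA : ℕ → ℕ) (gA : ℕ → ℕ → Bool),
      IsCondition I σA dA →
      ∃ (σ : ℕ → ℕ → Bool) (d : ℕ → ℕ) (g : ℕ → ℕ → Bool) (W : Set Cond),
        IsCondition I σ d ∧ Strong N σ d g σA dA gA ∧
        W ⊆ D ∧ W.Finite ∧ W.ncard ≤ L.length ∧
        (∀ ρ dq, IsCondition I ρ dq →
          CondLe ρ dq (amalg σ d {N} g).1 (amalg σ d {N} g).2 →
          (∃ h ∈ L, ∀ ℓ, (amalg σ d {N} g).2 ℓ < N → ∀ i, i < (amalg σ d {N} g).2 ℓ →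
            h ((amalg σ d {N} g).2 ℓ) i = if dq ℓ ≤ i then ρ ℓ i else false) →
          ∃ w ∈ W, Compatible I (ρ, dq) w) := by
  intro L
  induction L with
  | nil =>
    intro σA dA gA hA
    exact ⟨σA, dA, gA, ∅, hA, strong_refl N σA dA gA, Set.empty_subset D,
      Set.finite_empty, by simp, fun ρ dq _ _ ⟨h, hh, _⟩ => absurd hh List.not_mem_nil⟩
  | cons h L ih =>
    intro σA dA gA hA
    have hcd : ∀ σA' gA', ∀ ℓ, (Collapse N σA' dA gA' h).2 ℓ = if dA ℓ ≤ N then 0 else dA ℓ :=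
      fun _ _ _ => rfl
    -- the fully collapsed condition is a condition
    have hccond : IsCondition I (Collapse N σA dA gA h).1 (Collapse N σA dA gA h).2 := by
      constructor
      · intro ℓ
        show (if dA ℓ ≤ N then 0 else dA ℓ) ≤ ℓ
        split_ifs
        · exact Nat.zero_le _
        · exact hA.1 ℓ
      · intro j
        rcases Nat.eq_zero_or_pos j with rfl | hj
        · refine ideal_mem_of_subset hI ?_ (ideal_fibers_le hI hA.2 N)
          intro m hm
          simp only [Set.mem_setOf_eq] at hm ⊢
          show dA m ≤ N
          rw [hcd σA gA m] at hm
          by_cases h1 : dA m ≤ N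
          · exact h1
          · rw [if_neg h1] at hm; omega
        · refine ideal_mem_of_subset hI ?_ (hA.2 j)
          intro m hm
          simp only [Set.mem_setOf_eq] at hm ⊢
          rw [hcd σA gA m] at hm
          by_cases h1 : dA m ≤ N
          · rw [if_pos h1] at hm; omega
          · rwa [if_neg h1] at hm
    obtain ⟨w, hwD, hwle⟩ := hD.2 _ hccond
    have hwcond := hD.1 w hwD
    obtain ⟨hw1, ⟨e', he'le, he'⟩, hw3⟩ := hwle
    have hBd : ∀ ℓ, StepD N e' dA ℓ =
        if dA ℓ ≤ N then dA ℓ else if e' (dA ℓ) < N then N else e' (dA ℓ) := fun ℓ => rfl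
    -- the pulled-back condition
    have hdBle : ∀ ℓ, StepD N e' dA ℓ ≤ dA ℓ := by
      intro ℓ
      show (if dA ℓ ≤ N then dA ℓ else if e' (dA ℓ) < N then N else e' (dA ℓ)) ≤ dA ℓ
      split_ifs with h1 h2
      · exact le_rfl
      · omega
      · exact he'le _
    have hπhigh : ∀ ℓ, ¬ dA ℓ ≤ N → w.2 ℓ = e' (dA ℓ) := by
      intro ℓ h1
      rw [he' ℓ, hcd σA gA ℓ, if_neg h1]
    have hBcond : IsCondition I (StepS N w.1 σA dA) (StepD N e' dA) := by
      constructor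
      · intro ℓ; exact le_trans (hdBle ℓ) (hA.1 ℓ)
      · intro j
        rcases lt_trichotomy j N with hj | hj | hj
        · refine ideal_mem_of_subset hI ?_ (hA.2 j)
          intro m hm
          simp only [Set.mem_setOf_eq] at hm ⊢
          show dA m = j
          by_cases h1 : dA m ≤ N
          · rw [hBd m, if_pos h1] at hm; exact hm
          · exfalso
            rw [hBd m, if_neg h1] at hm
            split_ifs at hm <;> omega
        · refine ideal_mem_of_subset hI ?_
            (hI.2.2 _ _ (hA.2 N) (ideal_fibers_le hI hwcond.2 N))
          intro m hm
          simp only [Set.mem_union, Set.mem_setOf_eq] at hm ⊢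
          by_cases h1 : dA m ≤ N
          · rw [hBd m, if_pos h1] at hm; left; omega
          · right
            rw [hBd m, if_neg h1] at hm
            rw [hπhigh m h1]
            split_ifs at hm <;> omega
        · refine ideal_mem_of_subset hI ?_ (hwcond.2 j)
          intro m hm
          simp only [Set.mem_setOf_eq] at hm ⊢
          by_cases h1 : dA m ≤ N
          · exfalso
            rw [hBd m, if_pos h1] at hm; omega
          · rw [hBd m, if_neg h1] at hm
            rw [hπhigh m h1]
            split_ifs at hm <;> omega
    have hBS : Strong N (StepS N w.1 σA dA) (StepD N e' dA) (StepG N e' w.1 dA gA) σA dA gA := by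
      refine ⟨fun x => if x ≤ N then x else if e' x < N then N else e' x, ?_, ?_, ?_,
        fun ℓ => rfl, ?_, ?_, ?_, ?_⟩
      · intro x
        show (if x ≤ N then x else if e' x < N then N else e' x) ≤ x
        have := he'le x
        split_ifs <;> omega
      · intro x hx
        show (if x ≤ N then x else if e' x < N then N else e' x) = x
        rw [if_pos hx]
      · intro x hx
        show N ≤ if x ≤ N then x else if e' x < N then N else e' x
        rw [if_neg (by omega)]
        have := he'le x
        split_ifs <;> omega
      · -- (b)
        intro ℓ i hi hiℓ
        show (if dA ℓ ≤ N then σA ℓ i else w.1 ℓ i) = σA ℓ i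
        by_cases h1 : dA ℓ ≤ N
        · rw [if_pos h1]
        · rw [if_neg h1]
          have h2 : w.1 ℓ i = (Collapse N σA dA gA h).1 ℓ i :=
            (hw1 ℓ).2 i (by rw [hcd σA gA ℓ, if_neg h1]; exact hi) hiℓ
          rw [h2]
          show (if dA ℓ ≤ N ∧ i < dA ℓ then _ else σA ℓ i) = σA ℓ i
          rw [if_neg (by omega)]
      · -- (c)
        intro ℓ hℓ i hiN
        show (if N < dA ℓ ∧ e' (dA ℓ) ≤ N then _ else gA ℓ i) = gA ℓ i
        rw [if_neg (by omega)]
      · -- (d)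
        intro n m hnm hN i hi hilt
        have h1 : ¬ dA n ≤ N := by omega
        have h1m : ¬ dA m ≤ N := by rw [← hnm] at *; omega
        show (if dA n ≤ N then σA n i else w.1 n i) = (if dA m ≤ N then σA m i else w.1 m i)
        rw [if_neg h1, if_neg h1m]
        have hc2 : (Collapse N σA dA gA h).2 n = (Collapse N σA dA gA h).2 m := by
          rw [hcd σA gA n, hcd σA gA m, if_neg h1, if_neg h1m, hnm]
        refine hw3 n m hc2 i ?_ ?_
        · rw [hπhigh n h1]
          have h3 : e' (dA n) ≤ StepD N e' dA n := by
            rw [hBd n, if_neg h1]; split_ifs <;> omega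
          omega
        · rw [hcd σA gA n, if_neg h1]; exact hilt
      · -- (e)
        intro n m hnm hN hdn i hiN
        have h1 : ¬ dA n ≤ N := by omega
        have h1m : ¬ dA m ≤ N := by rw [← hnm] at *; omega
        have hE : e' (dA n) ≤ N := by
          by_contra hE
          rw [hBd n, if_neg h1, if_neg (by omega)] at hdn
          omega
        show (if N < dA n ∧ e' (dA n) ≤ N then (if e' (dA n) ≤ i then w.1 n i else false) else gA n i)
          = (if N < dA m ∧ e' (dA m) ≤ N then (if e' (dA m) ≤ i then w.1 m i else false) else gA m i)
        rw [← hnm, if_pos (⟨by omega, hE⟩ : N < dA n ∧ e' (dA n) ≤ N),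
          if_pos (⟨by omega, hE⟩ : N < dA n ∧ e' (dA n) ≤ N)]
        by_cases h2 : e' (dA n) ≤ i
        · rw [if_pos h2, if_pos h2]
          have hc2 : (Collapse N σA dA gA h).2 n = (Collapse N σA dA gA h).2 m := by
            rw [hcd σA gA n, hcd σA gA m, if_neg h1, if_neg h1m, hnm]
          refine hw3 n m hc2 i (by rw [hπhigh n h1]; exact h2) ?_
          rw [hcd σA gA n, if_neg h1]; omega
        · rw [if_neg h2, if_neg h2]
    obtain ⟨σ, d, g, W', hcond, hS, hWD, hWfin, hWcard, hpre⟩ :=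
      ih (StepS N w.1 σA dA) (StepD N e' dA) (StepG N e' w.1 dA gA) hBcond
    refine ⟨σ, d, g, insert w W', hcond, strong_trans hA.1 hS hBS,
      Set.insert_subset_iff.mpr ⟨hwD, hWD⟩, hWfin.insert w, ?_, ?_⟩
    · calc (insert w W').ncard ≤ W'.ncard + 1 := Set.ncard_insert_le _ _
        _ ≤ L.length + 1 := by omega
        _ = (h :: L).length := List.length_cons.symm
    · intro ρ dq hqc hqle hmm
      obtain ⟨h', hh', hmatch⟩ := hmm
      rcases List.mem_cons.mp hh' with rfl | hh'
      · exact ⟨w, Set.mem_insert _ _,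
          compat_main hI N σA dA gA hA.1 h' w.1 w.2
            ⟨hw1, ⟨e', he'le, he'⟩, hw3⟩ e' he'le he' σ d g hS ρ dq hqc hqle hmatch⟩
      · obtain ⟨w', hw'W, hcompat⟩ := hpre ρ dq hqc hqle ⟨h', hh', hmatch⟩
        exact ⟨w', Set.mem_insert_of_mem _ hw'W, hcompat⟩

/-- Lemma 2.5: given a condition `τ`, `N ∈ ℕ`, `A = ran(dτ) ∩ [0, N)` and a dense
set `D`, there are `σ ≤_A τ`, `W ⊆ D` of size at most `2^(|A|·max A)` and
`⃗g : dσ⁻¹{N} → 2^N` such that `σ[⃗g] ≤ τ` and `W` is predense below `σ[⃗g]`. -/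
theorem exists_amalg_predense (I : Set (Set ℕ)) (hI : IsIdeal I)
    (τ : ℕ → ℕ → Bool) (dτ : ℕ → ℕ) (hτ : IsCondition I τ dτ)
    (N : ℕ) (D : Set Cond) (hD : IsDense I D) :
    ∃ (σ : ℕ → ℕ → Bool) (dσ : ℕ → ℕ) (W : Set Cond) (g : ℕ → ℕ → Bool),
      IsCondition I σ dσ ∧
      CondLeA σ dσ τ dτ {j | j < N ∧ ∃ n, dτ n = j} ∧
      W ⊆ D ∧ W.Finite ∧
      W.ncard ≤ 2 ^ (Set.ncard {j | j < N ∧ ∃ n, dτ n = j} *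
        sSup {j | j < N ∧ ∃ n, dτ n = j}) ∧
      IsCondition I (amalg σ dσ {N} g).1 (amalg σ dσ {N} g).2 ∧
      CondLe (amalg σ dσ {N} g).1 (amalg σ dσ {N} g).2 τ dτ ∧
      PredenseBelow I W (amalg σ dσ {N} g) := by
  classical
  set A : Set ℕ := {j | j < N ∧ ∃ n, dτ n = j} with hAdef
  set Patt : Set (ℕ → ℕ → Bool) :=
    {h | ∀ j i, h j i = true → j < N ∧ i < j ∧ ∃ n, dτ n = j} with hPattdef
  set S : Finset (ℕ × ℕ) :=
    (Finset.range N ×ˢ Finset.range N).filter (fun p => p.2 < p.1 ∧ ∃ n, dτ n = p.1)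
      with hSdef
  have hmemS : ∀ j i : ℕ, (j, i) ∈ S ↔ (j < N ∧ i < j ∧ ∃ n, dτ n = j) := by
    intro j i
    simp only [hSdef, Finset.mem_filter, Finset.mem_product, Finset.mem_range]
    constructor
    · rintro ⟨⟨h1, h2⟩, h3, h4⟩; exact ⟨h1, h3, h4⟩
    · rintro ⟨h1, h2, h3⟩; exact ⟨⟨h1, by omega⟩, h2, h3⟩
  set F : (ℕ → ℕ → Bool) → ({x // x ∈ S} → Bool) := fun h p => h p.1.1 p.1.2 with hFdef
  have hsupp : ∀ h ∈ Patt, ∀ j i : ℕ, (j, i) ∉ S → h j i = false := by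
    intro h hh j i hji
    cases hb : h j i with
    | false => rfl
    | true =>
      exfalso
      obtain ⟨h1, h2, h3⟩ := hh j i hb
      exact hji ((hmemS j i).mpr ⟨h1, h2, h3⟩)
  have hinj : Set.InjOn F Patt := by
    intro h1 hh1 h2 hh2 hF
    funext j i
    by_cases hji : (j, i) ∈ S
    · have := congrFun hF (⟨(j, i), hji⟩ : {x // x ∈ S})
      exact this
    · rw [hsupp h1 hh1 j i hji, hsupp h2 hh2 j i hji]
  have hfin : Patt.Finite := by
    refine Set.Finite.of_finite_image ?_ hinj
    exact Set.toFinite _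
  set L : List (ℕ → ℕ → Bool) := hfin.toFinset.toList with hLdef
  have hmemL : ∀ h, h ∈ L ↔ h ∈ Patt := by
    intro h
    rw [hLdef, Finset.mem_toList, Set.Finite.mem_toFinset]
  -- counting
  have hbddA : BddAbove A := ⟨N, fun x hx => le_of_lt hx.1⟩
  have hcount : L.length ≤ 2 ^ (A.ncard * sSup A) := by
    have h1 : L.length = hfin.toFinset.card := Finset.length_toList _
    have h2 : hfin.toFinset.card ≤ Fintype.card ({x // x ∈ S} → Bool) := by
      rw [← Finset.card_univ]
      refine Finset.card_le_card_of_injOn F (fun a _ => Finset.mem_univ _) ?_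
      intro a ha b hb hab
      exact hinj (hfin.mem_toFinset.mp ha) (hfin.mem_toFinset.mp hb) hab
    have h3 : Fintype.card ({x // x ∈ S} → Bool) = 2 ^ S.card := by
      rw [Fintype.card_fun, Fintype.card_coe, Fintype.card_bool]
    have h4 : S.card ≤ A.ncard * sSup A := by
      set A' : Finset ℕ := (Finset.range N).filter (fun j => ∃ n, dτ n = j) with hA'def
      have hAA' : A = (A' : Set ℕ) := by
        ext j
        simp only [hAdef, Set.mem_setOf_eq, hA'def, Finset.coe_filter, Finset.mem_range]
      have hsub : S ⊆ A' ×ˢ Finset.range (sSup A) := by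
        intro p hp
        obtain ⟨h1', h2', h3'⟩ := (hmemS p.1 p.2).mp (by rwa [← Prod.mk.eta (p := p)] at hp)
        have hp1A : p.1 ∈ A := ⟨h1', h3'⟩
        have hle : p.1 ≤ sSup A := le_csSup hbddA hp1A
        have : p = (p.1, p.2) := rfl
        rw [this, Finset.mem_product]
        constructor
        · rw [hA'def, Finset.mem_filter, Finset.mem_range]; exact ⟨h1', h3'⟩
        · rw [Finset.mem_range]; omega
      calc S.card ≤ (A' ×ˢ Finset.range (sSup A)).card := Finset.card_le_card hsub
        _ = A'.card * sSup A := by rw [Finset.card_product, Finset.card_range]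
        _ = A.ncard * sSup A := by rw [hAA', Set.ncard_coe_finset]
    calc L.length = hfin.toFinset.card := h1
      _ ≤ 2 ^ S.card := by rw [← h3]; exact h2
      _ ≤ 2 ^ (A.ncard * sSup A) := Nat.pow_le_pow_right (by norm_num) h4
  -- run the recursion
  obtain ⟨σ, d, g, W, hcond, hS, hWD, hWfin, hWcard, hpre⟩ :=
    main_aux hI hD N L τ dτ (fun _ _ => false) hτ
  obtain ⟨Ψ, hΨle, hΨlow, hΨhi, hΨd, hb, hgc, hdcoh, hgcoh⟩ := hS
  have hdle : ∀ ℓ, d ℓ ≤ dτ ℓ := fun ℓ => by rw [hΨd ℓ]; exact hΨle _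
  have hfibers : ∀ j, j < N → ∀ m, d m = j ↔ dτ m = j := by
    intro j hj m
    constructor
    · intro hm
      rcases le_or_gt (dτ m) N with h1 | h1
      · rw [hΨd m, hΨlow _ h1] at hm; exact hm
      · exfalso; have := hΨhi _ h1; rw [hΨd m] at hm; omega
    · intro hm; rw [hΨd m, hm, hΨlow _ (by omega)]
  have hamd : ∀ ℓ, (amalg σ d {N} g).2 ℓ = if d ℓ = N then 0 else d ℓ := amalg_d σ d N g
  have hams : ∀ ℓ i, (amalg σ d {N} g).1 ℓ i = if d ℓ = N ∧ i < d ℓ then g ℓ i else σ ℓ i :=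
    amalg_s σ d N g
  refine ⟨σ, d, W, g, hcond, ⟨⟨fun n => ⟨hdle n, fun i hi hin => hb n i hi hin⟩,
    ⟨Ψ, hΨle, hΨd⟩, ?_⟩, ?_⟩, hWD, hWfin, le_trans hWcard hcount, ⟨?_, ?_⟩, ?_, ?_⟩
  · -- clause 3 of σ ≤ τ
    intro n m hnm i hi hilt
    rcases le_or_gt (dτ n) N with h1 | h1
    · exfalso; rw [hΨd n, hΨlow _ h1] at hi; omega
    · exact hdcoh n m hnm h1 i hi hilt
  · -- fibres over A agree
    intro j hj
    ext m
    simp only [Set.mem_setOf_eq]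
    exact hfibers j hj.1 m
  · -- amalg: d ≤ id
    intro ℓ
    rw [hamd ℓ]
    have := hcond.1 ℓ
    split_ifs <;> omega
  · -- amalg: fibers
    intro j
    rcases Nat.eq_zero_or_pos j with rfl | hj
    · refine ideal_mem_of_subset hI ?_ (hI.2.2 _ _ (hcond.2 0) (hcond.2 N))
      intro m hm
      simp only [Set.mem_setOf_eq, Set.mem_union] at hm ⊢
      rw [hamd m] at hm
      by_cases h1 : d m = N
      · right; exact h1
      · left; rwa [if_neg h1] at hm
    · refine ideal_mem_of_subset hI ?_ (hcond.2 j)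
      intro m hm
      simp only [Set.mem_setOf_eq] at hm ⊢
      rw [hamd m] at hm
      by_cases h1 : d m = N
      · rw [if_pos h1] at hm; omega
      · rwa [if_neg h1] at hm
  · -- amalg ≤ τ
    refine ⟨fun n => ⟨?_, fun i hi hin => ?_⟩,
      ⟨fun x => if Ψ x = N then 0 else Ψ x, fun x => ?_, fun n => ?_⟩, ?_⟩
    · rw [hamd n]
      have := hdle n
      split_ifs <;> omega
    · rw [hams n i, if_neg (by rintro ⟨-, hlt⟩; have := hdle n; omega)]
      exact hb n i hi hin
    · show (if Ψ x = N then 0 else Ψ x) ≤ x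
      have := hΨle x
      split_ifs <;> omega
    · show (amalg σ d {N} g).2 n = if Ψ (dτ n) = N then 0 else Ψ (dτ n)
      rw [hamd n, hΨd n]
    · -- clause 3 of amalg ≤ τ
      intro n m hnm i hi hilt
      have hdnm : d n = d m := by rw [hΨd n, hΨd m, hnm]
      rw [hams n i, hams m i]
      rcases le_or_gt (dτ n) N with h1 | h1
      · rcases lt_or_eq_of_le h1 with h2 | h2
        · -- dτ n < N : the region is empty
          exfalso
          have hdn : d n = dτ n := by rw [hΨd n, hΨlow _ h1]
          rw [hamd n, hdn, if_neg (by omega)] at hi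
          omega
        · -- dτ n = N : both values are g = false
          have hdn : d n = N := by rw [hΨd n, h2, hΨlow _ le_rfl]
          have hdm : d m = N := by omega
          have hiN : i < N := by omega
          rw [if_pos ⟨hdn, by omega⟩, if_pos ⟨hdm, by omega⟩]
          rw [hgc n (by omega) i hiN, hgc m (by omega) i hiN]
      · -- N < dτ n
        by_cases hdn : d n = N
        · have hdm : d m = N := by omega
          rcases Nat.lt_or_ge i N with hiN | hiN
          · rw [if_pos ⟨hdn, by omega⟩, if_pos ⟨hdm, by omega⟩]
            exact hgcoh n m hnm h1 hdn i hiN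
          · rw [if_neg (by rintro ⟨-, h'⟩; omega), if_neg (by rintro ⟨-, h'⟩; omega)]
            exact hdcoh n m hnm h1 i (by omega) hilt
        · have hdm : ¬ d m = N := by omega
          have hdi : d n ≤ i := by rw [hamd n, if_neg hdn] at hi; exact hi
          rw [if_neg (by rintro ⟨h', -⟩; exact hdn h'), if_neg (by rintro ⟨h', -⟩; exact hdm h')]
          exact hdcoh n m hnm h1 i hdi hilt
  · -- predensity
    intro q hq hqle
    obtain ⟨hq1, ⟨e_q, heqle, heq⟩, hq3⟩ := hqle
    set hh : ℕ → ℕ → Bool := fun j i =>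
      if j < N ∧ i < j ∧ ∃ ℓ, (amalg σ d {N} g).2 ℓ = j ∧ q.2 ℓ ≤ i ∧ q.1 ℓ i = true
      then true else false with hhdef
    have hamfib : ∀ ℓ j, 0 < j → (amalg σ d {N} g).2 ℓ = j → d ℓ = j := by
      intro ℓ j hj hℓ
      rw [hamd ℓ] at hℓ
      by_cases h1 : d ℓ = N
      · rw [if_pos h1] at hℓ; omega
      · rwa [if_neg h1] at hℓ
    have hhPatt : hh ∈ Patt := by
      intro j i htrue
      simp only [hhdef] at htrue
      by_cases hcond' : j < N ∧ i < j ∧ ∃ ℓ, (amalg σ d {N} g).2 ℓ = j ∧ q.2 ℓ ≤ i ∧ q.1 ℓ i = true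
      · obtain ⟨h1, h2, ℓ, h3, -, -⟩ := hcond'
        have hdℓ : d ℓ = j := hamfib ℓ j (by omega) h3
        exact ⟨h1, h2, by rw [← (hfibers j h1 ℓ).mp hdℓ]; exact ⟨ℓ, rfl⟩⟩
      · rw [if_neg hcond'] at htrue; exact absurd htrue (by simp)
    have hmatch : ∀ ℓ, (amalg σ d {N} g).2 ℓ < N → ∀ i, i < (amalg σ d {N} g).2 ℓ →
        hh ((amalg σ d {N} g).2 ℓ) i = if q.2 ℓ ≤ i then q.1 ℓ i else false := by
      intro ℓ hℓN i hiℓ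
      set j := (amalg σ d {N} g).2 ℓ with hjdef
      have hj0 : 0 < j := by omega
      by_cases hqi : q.2 ℓ ≤ i
      · rw [if_pos hqi]
        cases hval : q.1 ℓ i with
        | true =>
          rw [hhdef]
          show (if j < N ∧ i < j ∧ ∃ ℓ', (amalg σ d {N} g).2 ℓ' = j ∧ q.2 ℓ' ≤ i ∧ q.1 ℓ' i = true
            then true else false) = true
          rw [if_pos ⟨hℓN, hiℓ, ℓ, rfl, hqi, hval⟩]
        | false =>
          rw [hhdef]
          show (if j < N ∧ i < j ∧ ∃ ℓ', (amalg σ d {N} g).2 ℓ' = j ∧ q.2 ℓ' ≤ i ∧ q.1 ℓ' i = true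
            then true else false) = false
          rw [if_neg]
          rintro ⟨-, -, ℓ', h3, h4, h5⟩
          have := hq3 ℓ' ℓ (by rw [h3]) i h4 (by omega)
          rw [hval] at this
          rw [this] at h5
          exact Bool.false_ne_true h5
      · rw [if_neg hqi]
        rw [hhdef]
        show (if j < N ∧ i < j ∧ ∃ ℓ', (amalg σ d {N} g).2 ℓ' = j ∧ q.2 ℓ' ≤ i ∧ q.1 ℓ' i = true
          then true else false) = false
        rw [if_neg]
        rintro ⟨-, -, ℓ', h3, h4, -⟩
        have h6 : q.2 ℓ' = q.2 ℓ := by rw [heq ℓ', heq ℓ, h3]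
        omega
    obtain ⟨w, hwW, hcompat⟩ := hpre q.1 q.2 hq ⟨hq1, ⟨e_q, heqle, heq⟩, hq3⟩
      ⟨hh, (hmemL hh).mpr hhPatt, hmatch⟩
    exact ⟨w, hwW, hcompat⟩
end

section
/- If Z is a nowhere dense subset of the Cantor space 2^ω, then for every k ∈ ℕ there exist N > k and a function t : [k, N) → Bool such that no element of Z extends t; that is, for every z ∈ Z there is some i with k ≤ i < N and z(i) ≠ t(i). -/
open PiNat Set

private lemma notMem_closure_cylinder {Z : Set (ℕ → Bool)} {x : ℕ → Bool}
    (hx : x ∉ closure Z) : ∃ n : ℕ, ∀ z ∈ Z, ∃ i < n, z i ≠ x i := by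
  have hopen : IsOpen (closure Z)ᶜ := isClosed_closure.isOpen_compl
  obtain ⟨v, ⟨y, n, rfl⟩, hxv, hvsub⟩ :=
    (isTopologicalBasis_cylinders (fun _ : ℕ => Bool)).exists_subset_of_mem_open hx hopen
  refine ⟨n, fun z hz => ?_⟩
  by_contra h
  push_neg at h
  have hzcyl : z ∈ cylinder y n := by
    rw [mem_cylinder_iff]
    intro i hi
    rw [h i hi]
    exact mem_cylinder_iff.1 hxv i hi
  exact (hvsub hzcyl) (subset_closure hz)

private lemma aux (Z : Set (ℕ → Bool)) (hZ : IsNowhereDense Z) (k : ℕ)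
    (S : Finset (Fin k → Bool)) : ∃ N : ℕ, k ≤ N ∧ ∃ t : ℕ → Bool,
      ∀ z ∈ Z, (fun i : Fin k => z i) ∈ S →
        ∃ i : ℕ, k ≤ i ∧ i < N ∧ z i ≠ t i := by
  classical
  induction S using Finset.induction_on with
  | empty => exact ⟨k, le_refl k, fun _ => true, fun z _ h => absurd h (Finset.notMem_empty _)⟩
  | @insert s S' hs ih =>
    obtain ⟨N', hN', t', ht'⟩ := ih
    -- the open set U: prefix s on [0,k), t' on [k,N')
    set U : Set (ℕ → Bool) :=
      {y | (∀ i : Fin k, y i = s i) ∧ ∀ i, k ≤ i → i < N' → y i = t' i} with hU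
    have hUopen : IsOpen U := by
      have : U = (⋂ i : Fin k, {y : ℕ → Bool | y i = s i}) ∩
          (⋂ i ∈ Finset.Ico k N', {y : ℕ → Bool | y i = t' i}) := by
        ext y
        simp [hU, Finset.mem_Ico, and_imp]
      rw [this]
      apply IsOpen.inter
      · refine isOpen_iInter_of_finite fun i => ?_
        show IsOpen ((fun y : ℕ → Bool => y (i : ℕ)) ⁻¹' {x | x = s i})
        exact (isOpen_discrete _).preimage (continuous_apply _)
      · refine isOpen_biInter_finset fun i _ => ?_
        show IsOpen ((fun y : ℕ → Bool => y i) ⁻¹' {x | x = t' i})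
        exact (isOpen_discrete _).preimage (continuous_apply _)
    have hUne : U.Nonempty := by
      refine ⟨fun i => if h : i < k then s ⟨i, h⟩ else t' i, ?_, ?_⟩
      · intro i; simp [i.isLt]
      · intro i hi _; simp [Nat.not_lt.2 hi]
    -- find a point of U outside closure Z
    have : ¬ U ⊆ closure Z := by
      intro hsub
      have : U ⊆ interior (closure Z) := hUopen.subset_interior_iff.2 hsub
      rw [hZ] at this
      exact hUne.not_subset_empty this
    obtain ⟨x, hxU, hxc⟩ := not_subset.1 this
    obtain ⟨n, hn⟩ := notMem_closure_cylinder hxc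
    refine ⟨max (max N' n) k, le_max_right _ _, x, fun z hz hmem => ?_⟩
    rcases Finset.mem_insert.1 hmem with heq | hmem'
    · -- prefix of z is s
      by_contra h
      push_neg at h
      obtain ⟨i, hin, hne⟩ := hn z hz
      apply hne
      rcases lt_or_ge i k with hik | hik
      · have h1 : z i = s ⟨i, hik⟩ := congrFun heq ⟨i, hik⟩
        have h2 : x i = s ⟨i, hik⟩ := hxU.1 ⟨i, hik⟩
        rw [h1, h2]
      · exact h i hik (lt_of_lt_of_le hin (le_max_of_le_left (le_max_right _ _)))
    · -- prefix of z is in S'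
      obtain ⟨i, hik, hiN, hne⟩ := ht' z hz hmem'
      refine ⟨i, hik, lt_of_lt_of_le hiN (le_max_of_le_left (le_max_left _ _)), ?_⟩
      rwa [hxU.2 i hik hiN]

/-- If `Z ⊆ 2^ω` is nowhere dense then for every `k` there are `N > k` and
`t : [k, N) → 2` such that no element of `Z` extends `t`. -/
theorem nowhereDense_avoid (Z : Set (ℕ → Bool)) (hZ : IsNowhereDense Z) :
    ∀ k : ℕ, ∃ N : ℕ, k < N ∧ ∃ t : ℕ → Bool,
      ∀ z ∈ Z, ∃ i : ℕ, k ≤ i ∧ i < N ∧ z i ≠ t i := by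
  intro k
  obtain ⟨N, _, t, ht⟩ := aux Z hZ k Finset.univ
  refine ⟨max N (k + 1), lt_of_lt_of_le (Nat.lt_succ_self k) (le_max_right _ _), t,
    fun z hz => ?_⟩
  obtain ⟨i, h1, h2, h3⟩ := ht z hz (Finset.mem_univ _)
  exact ⟨i, h1, lt_of_lt_of_le h2 (le_max_left _ _), h3⟩
end

section
/- Let d ≥ 2 and let U be an ultrafilter on [ℕ]^2 that is (2,m)-selective for every m with 2 ≤ m ≤ d. Then for every m with 2 ≤ m ≤ d, λ^{m−2}(U) is an (m,d)-selective ultrafilter on [ℕ]^m. -/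
/-- `[ℕ]^m`: the collection of `m`-element subsets of `ℕ`. -/
abbrev NSet (m : ℕ) : Type := {s : Finset ℕ // s.card = m}

/-- `A ⊆ [ℕ]^m` is thick: for every `n ≥ m` there is an `n`-element set all of
whose `m`-element subsets belong to `A`. -/
def ThickSet (m : ℕ) (A : Set (NSet m)) : Prop :=
  ∀ n, m ≤ n → ∃ s : Finset ℕ, s.card = n ∧
    ∀ (t : Finset ℕ) (_ : t ⊆ s) (hc : t.card = m), (⟨t, hc⟩ : NSet m) ∈ A

/-- `λ^{n−m}(A) = {s ∈ [ℕ]^n : every m-element subset of s belongs to A}`. -/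
def lamSet (m n : ℕ) (A : Set (NSet m)) : Set (NSet n) :=
  {s | ∀ (t : Finset ℕ) (_ : t ⊆ s.1) (hc : t.card = m), (⟨t, hc⟩ : NSet m) ∈ A}

/-- `λ^{n−m}(F)`: the filter on `[ℕ]^n` generated by `{λ^{n−m}(A) : A ∈ F}`. -/
def lamFilter (m n : ℕ) (F : Filter (NSet m)) : Filter (NSet n) :=
  Filter.generate (lamSet m n '' F.sets)

/-- An ultrafilter on `[ℕ]^m` is thick iff all of its members are thick. -/
def ThickUltrafilter (m : ℕ) (U : Ultrafilter (NSet m)) : Prop :=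
  ∀ A ∈ U, ThickSet m A

/-- A thick ultrafilter `U` on `[ℕ]^m` is `(m,n)`-selective iff `λ^{n−m}(U)` is an
ultrafilter on `[ℕ]^n`. -/
def Selective (m n : ℕ) (U : Ultrafilter (NSet m)) : Prop :=
  ThickUltrafilter m U ∧
    ∃ W : Ultrafilter (NSet n), lamFilter m n (U : Filter (NSet m)) = (W : Filter (NSet n))

lemma lamSet_mono {m n : ℕ} {A B : Set (NSet m)} (h : A ⊆ B) :
    lamSet m n A ⊆ lamSet m n B := fun _ hs t ht hc => h (hs t ht hc)

lemma mem_lamFilter {m n : ℕ} {F : Filter (NSet m)} {A : Set (NSet n)} :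
    A ∈ lamFilter m n F ↔ ∃ B ∈ F, lamSet m n B ⊆ A := by
  constructor
  · intro h
    induction h with
    | basic h =>
      obtain ⟨B, hB, rfl⟩ := h
      exact ⟨B, hB, subset_rfl⟩
    | univ => exact ⟨Set.univ, Filter.univ_mem, Set.subset_univ _⟩
    | superset _ hsub ih =>
      obtain ⟨B, hB, h1⟩ := ih
      exact ⟨B, hB, h1.trans hsub⟩
    | inter _ _ ih1 ih2 =>
      obtain ⟨B1, hB1, h1⟩ := ih1
      obtain ⟨B2, hB2, h2⟩ := ih2
      exact ⟨B1 ∩ B2, Filter.inter_mem hB1 hB2,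
        Set.subset_inter ((lamSet_mono Set.inter_subset_left).trans h1)
          ((lamSet_mono Set.inter_subset_right).trans h2)⟩
  · rintro ⟨B, hB, hsub⟩
    exact Filter.GenerateSets.superset (.basic ⟨B, hB, rfl⟩) hsub

lemma thickSet_superset {m : ℕ} {A B : Set (NSet m)} (h : A ⊆ B) (hA : ThickSet m A) :
    ThickSet m B := by
  intro n hn
  obtain ⟨s, hs, hall⟩ := hA n hn
  exact ⟨s, hs, fun t ht hc => h (hall t ht hc)⟩

lemma thickSet_lamSet {m n : ℕ} (hmn : m ≤ n) {A : Set (NSet m)} (hA : ThickSet m A) :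
    ThickSet n (lamSet m n A) := by
  intro k hk
  obtain ⟨s, hs, hall⟩ := hA k (hmn.trans hk)
  exact ⟨s, hs, fun t ht _ u hu hcu => hall u (hu.trans ht) hcu⟩

lemma lamSet_comp {m d : ℕ} (hm : 2 ≤ m) (hmd : m ≤ d) (C : Set (NSet 2)) :
    lamSet m d (lamSet 2 m C) = lamSet 2 d C := by
  ext s
  constructor
  · intro hs u hu hcu
    obtain ⟨t, hut, hts, hct⟩ := Finset.exists_subsuperset_card_eq (n := m) hu
      (by rw [hcu]; exact hm) (by rw [s.2]; exact hmd)
    exact hs t hts hct u hut hcu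
  · intro hs t hts _ u hut hcu
    exact hs u (hut.trans hts) hcu

/-- If `d ≥ 2` and `U` is an ultrafilter on `[ℕ]^2` that is `(2,m)`-selective for every
`2 ≤ m ≤ d`, then for every `2 ≤ m ≤ d` the filter `λ^{m−2}(U)` is an `(m,d)`-selective
ultrafilter on `[ℕ]^m`. -/
theorem lam_selective (d : ℕ) (hd : 2 ≤ d) (U : Ultrafilter (NSet 2))
    (hU : ∀ m, 2 ≤ m → m ≤ d → Selective 2 m U) :
    ∀ m, 2 ≤ m → m ≤ d → ∃ W : Ultrafilter (NSet m),
      lamFilter 2 m (U : Filter (NSet 2)) = (W : Filter (NSet m)) ∧ Selective m d W := by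
  intro m hm hmd
  obtain ⟨hthick, W, hW⟩ := hU m hm hmd
  obtain ⟨_, W', hW'⟩ := hU d hd le_rfl
  refine ⟨W, hW, ?_, W', ?_⟩
  · -- ThickUltrafilter m W
    intro A hA
    have hA' : A ∈ lamFilter 2 m (U : Filter (NSet 2)) := by rw [hW]; exact hA
    obtain ⟨B, hB, hsub⟩ := mem_lamFilter.mp hA'
    exact thickSet_superset hsub (thickSet_lamSet hm (hthick B hB))
  · -- lamFilter m d W = lamFilter 2 d U = W'
    rw [← hW']
    apply Filter.ext
    intro A
    rw [mem_lamFilter, mem_lamFilter]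
    constructor
    · rintro ⟨B, hB, hsub⟩
      have hB' : B ∈ lamFilter 2 m (U : Filter (NSet 2)) := by rw [hW]; exact hB
      obtain ⟨C, hC, hCB⟩ := mem_lamFilter.mp hB'
      refine ⟨C, hC, ?_⟩
      rw [← lamSet_comp hm hmd]
      exact (lamSet_mono hCB).trans hsub
    · rintro ⟨C, hC, hsub⟩
      refine ⟨lamSet 2 m C, ?_, ?_⟩
      · rw [← hW]; exact mem_lamFilter.mpr ⟨C, hC, subset_rfl⟩
      · rw [lamSet_comp hm hmd]; exact hsub
end

section
/- Assume that for every ultrafilter U on ℕ there exists a (2,3)-selective ultrafilter V on [ℕ]^2 with U ≤_RK V. Let X be a set and let I be a non-principal ideal on X (an ideal containing every finite subset of X) such that there exists a countably infinite set Y ⊆ X with Y ∉ I. Then there exists a (2,3)-selective ultrafilter on [ℕ]^2 that is not an I-ultrafilter. -/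
/-- `I` is an ideal on the set `X`. -/
def IsIdealOn {X : Type*} (I : Set (Set X)) : Prop :=
  ∅ ∈ I ∧ (∀ A B : Set X, A ⊆ B → B ∈ I → A ∈ I) ∧
    (∀ A B : Set X, A ∈ I → B ∈ I → A ∪ B ∈ I)

/-- `U ≤_RK V` for `U` an ultrafilter on `ℕ` and `V` an ultrafilter on `[ℕ]^2`. -/
def RKle (U : Ultrafilter ℕ) (V : Ultrafilter (NSet 2)) : Prop :=
  ∃ g : NSet 2 → ℕ, ∀ S : Set ℕ, S ∈ U ↔ g ⁻¹' S ∈ V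

/-- `V` is an `I`-ultrafilter. -/
def IsIUltrafilter {X : Type*} (I : Set (Set X)) (V : Ultrafilter (NSet 2)) : Prop :=
  ∀ F : NSet 2 → X, ∃ A ∈ I, F ⁻¹' A ∈ V

/-- If every ultrafilter on `ℕ` lies RK-below some `(2,3)`-selective ultrafilter, and `I` is a
non-principal ideal on `X` admitting a countably infinite set `Y ∉ I`, then there is a
`(2,3)`-selective ultrafilter on `[ℕ]^2` that is not an `I`-ultrafilter. -/
theorem selective_not_I_ultrafilter {X : Type*}
    (hBZ : ∀ U : Ultrafilter ℕ, ∃ V : Ultrafilter (NSet 2), Selective 2 3 V ∧ RKle U V)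
    (I : Set (Set X)) (hI : IsIdealOn I)
    (hnp : ∀ A : Set X, A.Finite → A ∈ I)
    (hY : ∃ Y : Set X, Y.Countable ∧ Y.Infinite ∧ Y ∉ I) :
    ∃ V : Ultrafilter (NSet 2), Selective 2 3 V ∧ ¬ IsIUltrafilter I V := by
  classical
  obtain ⟨Y, hYc, hYi, hYI⟩ := hY
  haveI : Countable Y := hYc.to_subtype
  haveI : Infinite Y := hYi.to_subtype
  obtain ⟨d⟩ := nonempty_denumerable Y
  let e : ℕ → X := fun n => ((Denumerable.eqv Y).symm n : X)
  have hrange : Set.range e = Y := by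
    ext x
    constructor
    · rintro ⟨n, rfl⟩; exact ((Denumerable.eqv Y).symm n).2
    · intro hx; exact ⟨Denumerable.eqv Y ⟨x, hx⟩, by simp [e]⟩
  let L : Filter ℕ :=
  { sets := {S | e '' Sᶜ ∈ I}
    univ_sets := by
      simpa using hI.1
    sets_of_superset := by
      intro S T hS hST
      exact hI.2.1 _ _ (Set.image_mono (Set.compl_subset_compl.mpr hST)) hS
    inter_sets := by
      intro S T hS hT
      have : e '' (S ∩ T)ᶜ = e '' Sᶜ ∪ e '' Tᶜ := by
        rw [Set.compl_inter, Set.image_union]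
      simpa [this] using hI.2.2 _ _ hS hT }
  haveI hLne : L.NeBot := by
    refine Filter.neBot_iff.mpr fun h => ?_
    have : (∅ : Set ℕ) ∈ L := by rw [h]; exact Filter.mem_bot
    have : e '' (∅ : Set ℕ)ᶜ ∈ I := this
    rw [Set.compl_empty, Set.image_univ, hrange] at this
    exact hYI this
  set U := Ultrafilter.of L with hU
  have hLU : (U : Filter ℕ) ≤ L := Ultrafilter.of_le L
  obtain ⟨V, hsel, g, hg⟩ := hBZ U
  refine ⟨V, hsel, fun hIU => ?_⟩
  obtain ⟨A, hA, hAV⟩ := hIU (e ∘ g)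
  have h1 : e ⁻¹' A ∈ U := (hg _).mpr (by simpa [Set.preimage_comp] using hAV)
  have h2 : (e ⁻¹' A)ᶜ ∈ L := by
    show e '' (e ⁻¹' A)ᶜᶜ ∈ I
    rw [compl_compl]
    exact hI.2.1 _ _ (Set.image_preimage_subset _ _) hA
  have h3 : (∅ : Set ℕ) ∈ (U : Filter ℕ) := by
    have := Filter.inter_mem h1 (hLU h2)
    simpa using this
  exact Filter.empty_notMem _ h3
end

section
/- If F is a non-meagre P-filter on ℕ, then Player 1 has no winning strategy in the game G(F); that is, there is no tree Σ of finite sequences of finite subsets of ℕ such that (i) for every σ ∈ Σ there is A_σ ∈ F with σ⌢⟨a⟩ ∈ Σ for every finite subset a of A_σ, and (ii) for every infinite branch (a_n)_{n∈ℕ} through Σ, the union ⋃_{n∈ℕ} a_n does not belong to F. -/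
/-- `F` is a P-filter: every countable family of members of `F` has a
pseudo-intersection in `F` relative to almost-inclusion. -/
def IsPFilter (F : Filter ℕ) : Prop :=
  ∀ A : ℕ → Set ℕ, (∀ n, A n ∈ F) → ∃ B ∈ F, ∀ n, (B \ A n).Finite

lemma finite_lists {α : Type*} {t : Set α} (ht : t.Finite) (N : ℕ) :
    {l : List α | l.length ≤ N ∧ ∀ a ∈ l, a ∈ t}.Finite := by
  have : Finite ↥t := ht
  refine ((List.finite_length_le ↥t N).image (List.map Subtype.val)).subset ?_
  rintro l ⟨hlen, hmem⟩
  refine ⟨l.pmap (fun a h => ⟨a, h⟩) hmem, by simpa using hlen, ?_⟩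
  simp [List.map_pmap]

lemma nonmeagre_gaps (F : Filter ℕ)
    (hmeagre : ¬ IsMeagre {f : ℕ → Bool | {n | f n = true} ∈ F})
    (n : ℕ → ℕ) (hmono : StrictMono n) :
    ∃ C ∈ F, ∀ m, ∃ k, m ≤ k ∧ ∀ x, n k ≤ x → x < n (k+1) → x ∉ C := by
  by_contra h
  push_neg at h
  apply hmeagre
  set M : ℕ → Set (ℕ → Bool) :=
    fun m => {f | ∀ k, m ≤ k → ∃ x, n k ≤ x ∧ x < n (k+1) ∧ f x = true} with hM
  rw [isMeagre_iff_countable_union_isNowhereDense]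
  refine ⟨Set.range M, ?_, Set.countable_range M, ?_⟩
  · rintro _ ⟨m, rfl⟩
    have hcl : IsClosed (M m) := by
      have heq : M m = ⋂ k, ⋂ (_ : m ≤ k),
          ⋃ x ∈ Finset.Ico (n k) (n (k+1)), {f : ℕ → Bool | f x = true} := by
        ext f
        simp [hM, Finset.mem_Ico, and_assoc]
      rw [heq]
      refine isClosed_iInter fun k => isClosed_iInter fun _ => ?_
      exact Set.Finite.isClosed_biUnion (Finset.finite_toSet _)
        fun x _ => show IsClosed ((fun f : ℕ → Bool => f x) ⁻¹' {true}) from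
          (isClosed_discrete {true}).preimage (continuous_apply x)
    rw [hcl.isNowhereDense_iff, Set.eq_empty_iff_forall_notMem]
    intro f hf
    obtain ⟨I, u, hIu, hsub⟩ := isOpen_pi_iff.mp isOpen_interior f hf
    classical
    set g : ℕ → Bool := fun i => if i ∈ I then f i else false with hg
    have hgM : g ∈ M m := by
      refine interior_subset (hsub ?_)
      intro i hi
      have hgi : g i = f i := if_pos hi
      rw [hgi]
      exact (hIu i hi).2
    obtain ⟨x, hx1, hx2, hx3⟩ := hgM (max m (I.sup id + 1)) (le_max_left _ _)
    have hxI : x ∉ I := by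
      intro hxI
      have h1 : x ≤ I.sup id := Finset.le_sup (f := id) hxI
      have h2 : max m (I.sup id + 1) ≤ n (max m (I.sup id + 1)) := hmono.le_apply
      have h3 : I.sup id + 1 ≤ max m (I.sup id + 1) := le_max_right _ _
      omega
    simp [hg, hxI] at hx3
  · intro f hf
    obtain ⟨m, hm⟩ := h _ hf
    exact ⟨M m, ⟨m, rfl⟩, fun k hk => hm k hk⟩

/-- If `F` is a non-meagre P-filter on `ℕ` (non-meagre as a subset of the Cantor
space `2^ℕ` via characteristic functions), then Player 1 has no winning strategy
in the game `G(F)`: there is no tree `T` of finite sequences of finite subsets of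
`ℕ` such that (i) for each `s ∈ T` there is `A ∈ F` with `s⌢⟨a⟩ ∈ T` for every
finite `a ⊆ A`, and (ii) along every infinite branch the union of the entries is
not in `F`. -/
theorem no_winning_strategy (F : Filter ℕ) [F.NeBot]
    (hmeagre : ¬ IsMeagre {f : ℕ → Bool | {n | f n = true} ∈ F})
    (hP : IsPFilter F) :
    ¬ ∃ T : Set (List (Finset ℕ)),
      T.Nonempty ∧
      (∀ s t : List (Finset ℕ), s <+: t → t ∈ T → s ∈ T) ∧
      (∀ s ∈ T, ∃ A ∈ F, ∀ a : Finset ℕ, (a : Set ℕ) ⊆ A → s ++ [a] ∈ T) ∧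
      (∀ b : ℕ → Finset ℕ, (∀ n, (List.ofFn fun i : Fin n => b (i : ℕ)) ∈ T) →
        (⋃ n, (b n : Set ℕ)) ∉ F) := by
  rintro ⟨T, hne, hpre, hext, hwin⟩
  classical
  have hnil : [] ∈ T := by
    obtain ⟨s, hs⟩ := hne
    exact hpre [] s List.nil_prefix hs
  choose A0 hA0F hA0ext using hext
  let A : List (Finset ℕ) → Set ℕ := fun s => if hs : s ∈ T then A0 s hs else Set.univ
  have hAF : ∀ s, A s ∈ F := by
    intro s
    by_cases hs : s ∈ T
    · simpa [A, hs] using hA0F s hs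
    · simpa [A, hs] using F.univ_mem
  have hAext : ∀ s, s ∈ T → ∀ a : Finset ℕ, (a : Set ℕ) ⊆ A s → s ++ [a] ∈ T := by
    intro s hs a ha
    rw [show A s = A0 s hs from dif_pos hs] at ha
    exact hA0ext s hs a ha
  -- pseudo-intersection
  obtain ⟨B0, hB0F, hB0⟩ := hP
    (fun k => A (((Encodable.decode k : Option (List (Finset ℕ))).getD []))) (fun k => hAF _)
  have hB0' : ∀ s : List (Finset ℕ), (B0 \ A s).Finite := by
    intro s
    have := hB0 (Encodable.encode s)
    simpa [Encodable.encodek] using this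
  set B : Set ℕ := B0 ∩ A [] with hBdef
  have hBF : B ∈ F := F.inter_sets hB0F (hAF [])
  have hB' : ∀ s, (B \ A s).Finite := fun s =>
    (hB0' s).subset (fun x hx => ⟨hx.1.1, hx.2⟩)
  -- bounds m s
  have hbdd : ∀ s : List (Finset ℕ), ∃ m, ∀ x, x ∈ B → x ∉ A s → x < m := by
    intro s
    obtain ⟨m, hm⟩ := (hB' s).bddAbove
    exact ⟨m + 1, fun x hx1 hx2 => Nat.lt_succ_of_le (hm ⟨hx1, hx2⟩)⟩
  choose m hm using hbdd
  -- finite stage sets and bound MM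
  have hSfin : ∀ N : ℕ,
      {s : List (Finset ℕ) | s.length ≤ N ∧ ∀ a ∈ s, a ∈ {a : Finset ℕ | a ⊆ Finset.range N}}.Finite := by
    intro N
    refine finite_lists ?_ N
    refine Set.Finite.subset (Finset.range N).powerset.finite_toSet ?_
    intro a ha
    exact Finset.mem_coe.mpr (Finset.mem_powerset.mpr ha)
  let MM : ℕ → ℕ := fun N => (hSfin N).toFinset.sup m
  have hMM : ∀ N s, s.length ≤ N → (∀ a ∈ s, a ⊆ Finset.range N) → m s ≤ MM N := by
    intro N s h1 h2
    exact Finset.le_sup ((hSfin N).mem_toFinset.mpr ⟨h1, h2⟩)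
  -- interval endpoints
  let nseq : ℕ → ℕ := fun k => Nat.rec 0 (fun _ ih => max (ih + 1) (MM ih)) k
  have hnsucc : ∀ k, nseq (k+1) = max (nseq k + 1) (MM (nseq k)) := fun k => rfl
  have hnmono : StrictMono nseq := by
    apply strictMono_nat_of_lt_succ
    intro k
    rw [hnsucc]
    omega
  -- key: positions bounded by stage nseq k are dominated
  have hkey : ∀ k (s : List (Finset ℕ)), s.length ≤ nseq k →
      (∀ a ∈ s, a ⊆ Finset.range (nseq k)) →
      ∀ x, x ∈ B → nseq (k+1) ≤ x → x ∈ A s := by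
    intro k s h1 h2 x hxB hx
    by_contra hxA
    have := hm s x hxB hxA
    have h3 := hMM (nseq k) s h1 h2
    have h4 := hnsucc k
    omega
  -- gaps from non-meagreness
  obtain ⟨C, hCF, hC⟩ := nonmeagre_gaps F hmeagre nseq hnmono
  choose gp hgp1 hgp2 using hC
  let kk : ℕ → ℕ := fun j => Nat.rec (gp 0) (fun _ ih => gp (ih + 1)) j
  have hkksucc : ∀ j, kk (j+1) = gp (kk j + 1) := fun j => rfl
  have hkkmono : StrictMono kk := by
    apply strictMono_nat_of_lt_succ
    intro j
    rw [hkksucc]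
    exact lt_of_lt_of_le (Nat.lt_succ_self _) (hgp1 (kk j + 1))
  have hkkgap : ∀ j x, nseq (kk j) ≤ x → x < nseq (kk j + 1) → x ∉ C := by
    intro j
    cases j with
    | zero => exact hgp2 0
    | succ i => rw [hkksucc]; exact hgp2 (kk i + 1)
  clear_value nseq kk
  set D : Set ℕ := B ∩ C with hDdef
  have hDF : D ∈ F := F.inter_sets hBF hCF
  -- the plays
  let b : ℕ → Finset ℕ := fun j =>
    if j = 0 then (Finset.range (nseq (kk 1))).filter (· ∈ D)
    else (Finset.Ico (nseq (kk j)) (nseq (kk (j+1)))).filter (· ∈ D)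
  have hb0 : ∀ x, x ∈ b 0 ↔ x ∈ D ∧ x < nseq (kk 1) := by
    intro x; simp [b, and_comm]
  have hbj : ∀ j, j ≠ 0 → ∀ x, x ∈ b j ↔ x ∈ D ∧ nseq (kk j) ≤ x ∧ x < nseq (kk (j+1)) := by
    intro j hj x; simp [b, hj, Finset.mem_Ico]; tauto
  have hbD : ∀ j x, x ∈ b j → x ∈ D := by
    intro j x hx
    by_cases hj : j = 0
    · subst hj; exact ((hb0 x).mp hx).1
    · exact ((hbj j hj x).mp hx).1
  -- lower bound for plays j ≥ 1
  have hblow : ∀ j, j ≠ 0 → ∀ x, x ∈ b j → nseq (kk j + 1) ≤ x := by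
    intro j hj x hx
    obtain ⟨hxD, hx1, hx2⟩ := (hbj j hj x).mp hx
    by_contra hlt
    exact hkkgap j x hx1 (by omega) hxD.2
  -- entries of plays are bounded
  have hbup : ∀ j x, x ∈ b j → x < nseq (kk (j+1)) := by
    intro j x hx
    by_cases hj : j = 0
    · subst hj; exact ((hb0 x).mp hx).2
    · exact ((hbj j hj x).mp hx).2.2
  -- positions
  have hpos : ∀ j : ℕ, (List.ofFn fun i : Fin j => b (i : ℕ)) ∈ T := by
    intro j
    induction j with
    | zero => simpa using hnil
    | succ j ih =>
      have hsplit : (List.ofFn fun i : Fin (j+1) => b (i : ℕ)) =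
          (List.ofFn fun i : Fin j => b (i : ℕ)) ++ [b j] := by
        rw [List.ofFn_succ']
        simp [List.concat_eq_append]
      rw [hsplit]
      refine hAext _ ih (b j) ?_
      set s : List (Finset ℕ) := List.ofFn fun i : Fin j => b (i : ℕ) with hs
      intro x hx
      simp only [Finset.mem_coe] at hx
      by_cases hj : j = 0
      · subst hj
        have hxD := hbD 0 x hx
        have : s = [] := by simp [hs]
        rw [this]
        exact (hDdef ▸ hxD).1.2
      · -- use hkey at stage kk j
        refine hkey (kk j) s ?_ ?_ x (hbD j x hx).1 (hblow j hj x hx)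
        · have h1 : s.length = j := by simp [hs]
          have h2 : j ≤ kk j := hkkmono.le_apply
          have h3 : kk j ≤ nseq (kk j) := hnmono.le_apply
          omega
        · intro a ha
          rw [hs, List.mem_ofFn] at ha
          obtain ⟨i, rfl⟩ := ha
          intro x hxa
          have h1 := hbup i x hxa
          rw [Finset.mem_range]
          have hij : (i : ℕ) + 1 ≤ j := i.isLt
          have h2 : nseq (kk ((i : ℕ) + 1)) ≤ nseq (kk j) :=
            hnmono.monotone (hkkmono.monotone hij)
          omega
  -- the union of the plays is in F
  have hU : D ⊆ ⋃ j, (b j : Set ℕ) := by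
    intro x hxD
    rcases lt_or_ge x (nseq (kk 1)) with hx1 | hx1
    · exact Set.mem_iUnion.mpr ⟨0, (hb0 x).mpr ⟨hxD, hx1⟩⟩
    · have hxge1 : 1 ≤ x := by
        have ha : 1 ≤ kk 1 := hkkmono.le_apply
        have hb2 : kk 1 ≤ nseq (kk 1) := hnmono.le_apply
        omega
      have hbound : ∀ j, nseq (kk j) ≤ x → j ≤ x := by
        intro j hj
        have h1 : j ≤ kk j := hkkmono.le_apply
        have h2 : kk j ≤ nseq (kk j) := hnmono.le_apply
        omega
      set j0 := Nat.findGreatest (fun j => nseq (kk j) ≤ x) (x + 1) with hj0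
      have hj0P : nseq (kk j0) ≤ x := by
        rw [hj0]
        exact Nat.findGreatest_spec (P := fun j => nseq (kk j) ≤ x) (m := 1) (by omega) hx1
      have hj01 : 1 ≤ j0 := by
        rw [hj0]
        exact Nat.le_findGreatest (by omega) hx1
      have hj0max : x < nseq (kk (j0 + 1)) := by
        by_contra hcon
        push_neg at hcon
        refine Nat.findGreatest_is_greatest (P := fun j => nseq (kk j) ≤ x)
          (n := x + 1) (k := j0 + 1) ?_ ?_ hcon
        · omega
        · have := hbound _ hcon; omega
      refine Set.mem_iUnion.mpr ⟨j0, ?_⟩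
      exact (hbj j0 (by omega) x).mpr ⟨hxD, hj0P, hj0max⟩
  exact hwin b hpos (F.mem_of_superset hDF hU)
end

section
/- Let V be a filter on ℕ, let U be a V-thick filter on ⊕_{n∈ω} n, let d ≥ 1, and let P assign to each pair (m, s), where m ∈ ℕ and s is a d-element subset of {0, …, m−1}, a value in {0, 1}. Then there exists J ∈ {0, 1} such that for every A ∈ U and every k ∈ ℕ, the set {m ∈ ℕ : μ_{P,m,J}(A) ≥ k} belongs to V⁺. -/
/-- `⊕_{n∈ω} n = {(n, j) : j < n}`. -/
abbrev Opl : Type := {p : ℕ × ℕ // p.2 < p.1}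

/-- `S` is `V`-positive: it meets every member of `V`. -/
def VPos (V : Filter ℕ) (S : Set ℕ) : Prop :=
  ∀ B ∈ V, (S ∩ B).Nonempty

/-- A filter `U` on `⊕_{n∈ω} n` is `V`-thick. -/
def VThick (V : Filter ℕ) (U : Filter Opl) : Prop :=
  ∀ A ∈ U, ∀ k : ℕ,
    VPos V {n | k ≤ Set.ncard {j | ∃ h : j < n, (⟨(n, j), h⟩ : Opl) ∈ A}}

/-- `L_{P,m,j}(A)`: the collection of `H ⊆ {0, …, m−1}` such that `{m} × H ⊆ A`
and `P(m, s) = j` for every `d`-element subset `s` of `H`. -/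
def Lset (d : ℕ) (P : ℕ → Finset ℕ → Bool) (m : ℕ) (j : Bool) (A : Set Opl) :
    Set (Finset ℕ) :=
  {H | (∀ h ∈ H, ∃ hh : h < m, (⟨(m, h), hh⟩ : Opl) ∈ A) ∧
    ∀ s ⊆ H, s.card = d → P m s = j}

/-- `μ_{P,m,j}(A)`: the maximal size of a member of `L_{P,m,j}(A)`. -/
noncomputable def mu (d : ℕ) (P : ℕ → Finset ℕ → Bool) (m : ℕ) (j : Bool)
    (A : Set Opl) : ℕ :=
  sSup (Finset.card '' Lset d P m j A)


/-- Pre-homogeneous extraction: from the Ramsey property at level `d`, on any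
large enough set we can find `m` points such that the colour of any
`(d+1)`-subset depends only on its minimum. -/
lemma pre_homog (d : ℕ)
    (IH : ∀ k : ℕ, ∃ N : ℕ, ∀ (c : Finset ℕ → Bool) (S : Finset ℕ), N ≤ S.card →
      ∃ H, H ⊆ S ∧ k ≤ H.card ∧ ∃ j, ∀ s ⊆ H, s.card = d → c s = j) :
    ∀ m : ℕ, ∃ M : ℕ, ∀ (c : Finset ℕ → Bool) (S : Finset ℕ), M ≤ S.card →
      ∃ T, T ⊆ S ∧ m ≤ T.card ∧ ∃ g : ℕ → Bool,
        ∀ s ⊆ T, s.card = d + 1 → ∀ x ∈ s, (∀ y ∈ s, x ≤ y) → c s = g x := by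
  intro m
  induction m with
  | zero =>
    refine ⟨0, fun c S _ => ⟨∅, Finset.empty_subset _, le_refl _, fun _ => true, ?_⟩⟩
    intro s hs hcard x hx _
    rw [Finset.subset_empty.mp hs] at hx
    simp at hx
  | succ m ih =>
    obtain ⟨M', hM'⟩ := ih
    obtain ⟨N, hN⟩ := IH M'
    refine ⟨N + 1, fun c S hS => ?_⟩
    have hne : S.Nonempty := Finset.card_pos.mp (by omega)
    set x := S.min' hne with hxdef
    have hxS : x ∈ S := S.min'_mem hne
    have hS' : N ≤ (S.erase x).card := by
      rw [Finset.card_erase_of_mem hxS]; omega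
    obtain ⟨H, hHS, hHcard, j, hj⟩ := hN (fun t => c (insert x t)) (S.erase x) hS'
    obtain ⟨T', hT'H, hT'card, g', hg'⟩ := hM' c H hHcard
    have hxT' : x ∉ T' := fun h => (Finset.mem_erase.mp (hHS (hT'H h))).1 rfl
    refine ⟨insert x T', ?_, ?_, fun y => if y = x then j else g' y, ?_⟩
    · intro y hy
      rcases Finset.mem_insert.mp hy with rfl | hy
      · exact hxS
      · exact (S.erase_subset x) (hHS (hT'H hy))
    · rw [Finset.card_insert_of_notMem hxT']; omega
    · intro s hsT hcard z hz hzle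
      have hsS : s ⊆ S := hsT.trans (by
        intro y hy
        rcases Finset.mem_insert.mp hy with rfl | hy
        · exact hxS
        · exact (S.erase_subset x) (hHS (hT'H hy)))
      by_cases hxs : x ∈ s
      · have hzx : z = x := le_antisymm (hzle x hxs) (S.min'_le z (hsS hz))
        have herase : s.erase x ⊆ T' := by
          intro y hy
          have := Finset.mem_erase.mp hy
          rcases Finset.mem_insert.mp (hsT this.2) with h | h
          · exact absurd h this.1
          · exact h
        have hc : c (insert x (s.erase x)) = j := by
          apply hj
          · exact herase.trans hT'H
          · rw [Finset.card_erase_of_mem hxs, hcard]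
            omega
        rw [Finset.insert_erase hxs] at hc
        simp [hc, hzx]
      · have hsT' : s ⊆ T' := by
          intro y hy
          rcases Finset.mem_insert.mp (hsT hy) with rfl | h
          · exact absurd hy hxs
          · exact h
        have hzx : z ≠ x := fun h => hxs (h ▸ hz)
        simp [hg' s hsT' hcard z hz hzle, hzx]

/-- Finite Ramsey theorem for `d`-element subsets with two colours. -/
lemma ramsey : ∀ d k : ℕ, ∃ N : ℕ, ∀ (c : Finset ℕ → Bool) (S : Finset ℕ), N ≤ S.card →
    ∃ H, H ⊆ S ∧ k ≤ H.card ∧ ∃ j, ∀ s ⊆ H, s.card = d → c s = j := by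
  intro d
  induction d with
  | zero =>
    intro k
    refine ⟨k, fun c S hS => ⟨S, le_refl _, hS, c ∅, ?_⟩⟩
    intro s _ hcard
    rw [Finset.card_eq_zero.mp hcard]
  | succ d ih =>
    intro k
    obtain ⟨M, hM⟩ := pre_homog d ih (2 * k)
    refine ⟨M, fun c S hS => ?_⟩
    obtain ⟨T, hTS, hTcard, g, hg⟩ := hM c S hS
    have hsplit : (T.filter (fun y => g y = true)).card
        + (T.filter (fun y => ¬ g y = true)).card = T.card :=
      Finset.card_filter_add_card_filter_not _
    have hcases : k ≤ (T.filter (fun y => g y = true)).card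
        ∨ k ≤ (T.filter (fun y => ¬ g y = true)).card := by omega
    have key : ∀ (j : Bool), ∀ H, H ⊆ T → (∀ y ∈ H, g y = j) →
        ∀ s ⊆ H, s.card = d + 1 → c s = j := by
      intro j H hHT hHg s hsH hcard
      have hne : s.Nonempty := Finset.card_pos.mp (by omega)
      have := hg s (hsH.trans hHT) hcard (s.min' hne) (s.min'_mem hne)
        (fun y hy => s.min'_le y hy)
      rw [this, hHg _ (hsH (s.min'_mem hne))]
    rcases hcases with h | h
    · refine ⟨T.filter (fun y => g y = true), (Finset.filter_subset _ _).trans hTS, h,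
        true, key true _ (Finset.filter_subset _ _) (fun y hy => (Finset.mem_filter.mp hy).2)⟩
    · refine ⟨T.filter (fun y => ¬ g y = true), (Finset.filter_subset _ _).trans hTS, h,
        false, key false _ (Finset.filter_subset _ _)
          (fun y hy => by simpa using (Finset.mem_filter.mp hy).2)⟩

lemma bddAbove_Lset (d : ℕ) (P : ℕ → Finset ℕ → Bool) (m : ℕ) (j : Bool) (A : Set Opl) :
    BddAbove (Finset.card '' Lset d P m j A) := by
  refine ⟨m, ?_⟩
  rintro n ⟨H, hH, rfl⟩
  have hsub : H ⊆ Finset.range m := by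
    intro h hh
    obtain ⟨hlt, -⟩ := hH.1 h hh
    exact Finset.mem_range.mpr hlt
  simpa using Finset.card_le_card hsub

lemma le_mu_of_mem (d : ℕ) (P : ℕ → Finset ℕ → Bool) (m : ℕ) (j : Bool) (A : Set Opl)
    (H : Finset ℕ) (hH : H ∈ Lset d P m j A) : H.card ≤ mu d P m j A :=
  le_csSup (bddAbove_Lset d P m j A) ⟨H, hH, rfl⟩

/-- If `U` is a `V`-thick filter on `⊕_{n∈ω} n` and `P` is a 2-colouring of the pairs
`(m, s)` with `s` a `d`-element subset of `{0, …, m−1}`, then there is a colour `J`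
such that for every `A ∈ U` and every `k`, the set `{m : μ_{P,m,J}(A) ≥ k}` is
`V`-positive. -/
theorem exists_homog_colour (V : Filter ℕ) [V.NeBot] (U : Filter Opl) [U.NeBot]
    (hthick : VThick V U) (d : ℕ) (hd : 1 ≤ d) (P : ℕ → Finset ℕ → Bool) :
    ∃ J : Bool, ∀ A ∈ U, ∀ k : ℕ, VPos V {m | k ≤ mu d P m J A} := by
  classical
  by_contra hcon
  push_neg at hcon
  obtain ⟨A₀, hA₀U, k₀, h₀⟩ := hcon false
  obtain ⟨A₁, hA₁U, k₁, h₁⟩ := hcon true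
  simp only [VPos, not_forall] at h₀ h₁
  obtain ⟨B₀, hB₀V, h₀⟩ := h₀
  obtain ⟨B₁, hB₁V, h₁⟩ := h₁
  set A : Set Opl := A₀ ∩ A₁ with hAdef
  have hAU : A ∈ U := Filter.inter_mem hA₀U hA₁U
  obtain ⟨N, hN⟩ := ramsey d (max k₀ k₁)
  obtain ⟨m, hm1, hm2⟩ := hthick A hAU N (B₀ ∩ B₁) (Filter.inter_mem hB₀V hB₁V)
  set S : Finset ℕ :=
    (Finset.range m).filter (fun i => ∃ h : i < m, (⟨(m, i), h⟩ : Opl) ∈ A) with hSdef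
  have hset : {i | ∃ h : i < m, (⟨(m, i), h⟩ : Opl) ∈ A} = ↑S := by
    ext i
    simp only [Set.mem_setOf_eq, hSdef, Finset.coe_filter, Finset.mem_range]
    constructor
    · rintro ⟨h, hA⟩
      exact ⟨h, h, hA⟩
    · rintro ⟨-, h, hA⟩
      exact ⟨h, hA⟩
  have hScard : N ≤ S.card := by
    have := hm1
    simp only [Set.mem_setOf_eq] at this
    rwa [hset, Set.ncard_coe_finset] at this
  obtain ⟨H, hHS, hHcard, j, hj⟩ := hN (P m) S hScard
  have hHmem : ∀ h ∈ H, ∃ hh : h < m, (⟨(m, h), hh⟩ : Opl) ∈ A := by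
    intro h hh
    have := hHS hh
    rw [hSdef, Finset.mem_filter] at this
    exact this.2
  cases j with
  | false =>
    have hL : H ∈ Lset d P m false A₀ := by
      refine ⟨fun h hh => ?_, hj⟩
      obtain ⟨hlt, hmem⟩ := hHmem h hh
      exact ⟨hlt, hmem.1⟩
    have : k₀ ≤ mu d P m false A₀ :=
      le_trans (le_trans (le_max_left k₀ k₁) hHcard) (le_mu_of_mem d P m false A₀ H hL)
    exact h₀ ⟨m, this, hm2.1⟩
  | true =>
    have hL : H ∈ Lset d P m true A₁ := by
      refine ⟨fun h hh => ?_, hj⟩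
      obtain ⟨hlt, hmem⟩ := hHmem h hh
      exact ⟨hlt, hmem.2⟩
    have : k₁ ≤ mu d P m true A₁ :=
      le_trans (le_trans (le_max_right k₀ k₁) hHcard) (le_mu_of_mem d P m true A₁ H hL)
    exact h₁ ⟨m, this, hm2.2⟩
end

section
/- A non-principal ultrafilter U on ℕ is a P-point if and only if U is an 𝔽⊗𝔽-ultrafilter, i.e., for every function F : ℕ → ℕ × ℕ there is A ∈ 𝔽⊗𝔽 with F⁻¹(A) ∈ U. -/
/-- The Fubini product `𝔽⊗𝔽` of the ideal of finite sets with itself: those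
`A ⊆ ℕ × ℕ` such that only finitely many vertical sections of `A` are infinite. -/
def finTimesFin : Set (Set (ℕ × ℕ)) :=
  {A | {n : ℕ | {m : ℕ | (n, m) ∈ A}.Infinite}.Finite}

/-- A non-principal ultrafilter `U` on `ℕ` is a P-point iff it is an
`𝔽⊗𝔽`-ultrafilter. -/
theorem pPoint_iff_finTimesFin_ultrafilter (U : Ultrafilter ℕ)
    (hU : ∀ A : Set ℕ, A.Finite → A ∉ U) :
    (∀ A : ℕ → Set ℕ, (∀ n, A n ∈ U) → ∃ B ∈ U, ∀ n, (B \ A n).Finite) ↔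
      (∀ F : ℕ → ℕ × ℕ, ∃ A ∈ finTimesFin, F ⁻¹' A ∈ U) := by
  classical
  constructor
  · intro hP F
    by_cases h : ∃ n, {m | (F m).1 = n} ∈ U
    · obtain ⟨n, hn⟩ := h
      refine ⟨{p | p.1 = n}, ?_, hn⟩
      have hsub : {k : ℕ | {m : ℕ | (k, m) ∈ {p : ℕ × ℕ | p.1 = n}}.Infinite} ⊆ {n} := by
        intro k hk
        by_contra hkn
        simp only [Set.mem_singleton_iff] at hkn
        apply hk
        have he : {m : ℕ | (k, m) ∈ {p : ℕ × ℕ | p.1 = n}} = ∅ := by ext m; simp [hkn]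
        rw [he]; exact Set.finite_empty
      exact (Set.finite_singleton n).subset hsub
    · push_neg at h
      obtain ⟨B, hB, hBfin⟩ := hP (fun n => {m | (F m).1 ≠ n}) (fun n =>
        (U.compl_mem_iff_notMem (s := {m | (F m).1 = n})).2 (h n))
      refine ⟨F '' B, ?_, Filter.mem_of_superset hB (Set.subset_preimage_image F B)⟩
      have key : ∀ n, {m | (n, m) ∈ F '' B}.Finite := by
        intro n
        have hfin : ({k | k ∈ B ∧ (F k).1 = n}).Finite := by
          refine (hBfin n).subset ?_
          rintro k ⟨hk1, hk2⟩
          exact ⟨hk1, by simpa using hk2⟩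
        have hsub : {m | (n, m) ∈ F '' B} ⊆ (fun k => (F k).2) '' {k | k ∈ B ∧ (F k).1 = n} := by
          rintro m ⟨k, hk, hFk⟩
          exact ⟨k, ⟨hk, by simp [hFk]⟩, by simp [hFk]⟩
        exact ((hfin.image _).subset hsub)
      have hempty : {n : ℕ | {m : ℕ | (n, m) ∈ F '' B}.Infinite} = ∅ := by
        ext n
        simp only [Set.mem_setOf_eq, Set.mem_empty_iff_false, iff_false]
        exact Set.not_infinite.2 (key n)
      show {n : ℕ | {m : ℕ | (n, m) ∈ F '' B}.Infinite}.Finite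
      rw [hempty]; exact Set.finite_empty
  · intro hI A hA
    set A' : ℕ → Set ℕ := fun n => ⋂ k ∈ Set.Iic n, A k with hA'def
    have hA'U : ∀ n, A' n ∈ U := fun n =>
      (Filter.biInter_mem (Set.finite_Iic n)).2 fun k _ => hA k
    have hA'sub : ∀ n, A' n ⊆ A n := fun n =>
      Set.biInter_subset_of_mem (Set.mem_Iic.2 le_rfl)
    by_cases hC : (⋂ n, A' n) ∈ U
    · refine ⟨⋂ n, A' n, hC, fun n => ?_⟩
      have hd : (⋂ k, A' k) \ A n = ∅ :=
        Set.diff_eq_empty.2 ((Set.iInter_subset A' n).trans (hA'sub n))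
      simp [hd]
    · have hCc : (⋂ n, A' n)ᶜ ∈ U := (U.compl_mem_iff_notMem).2 hC
      set f : ℕ → ℕ := fun m => if h : ∃ n, m ∉ A' n then Nat.find h else 0 with hf
      obtain ⟨S, hSI, hSU⟩ := hI (fun m => (f m, m))
      set N := {n : ℕ | {m : ℕ | (n, m) ∈ S}.Infinite} with hNdef
      have hN : N.Finite := hSI
      set B := ((fun m => (f m, m)) ⁻¹' S) ∩ (⋂ n, A' n)ᶜ ∩ ⋂ n ∈ N, A' n with hBdef
      have hBU : B ∈ U := by
        refine Filter.inter_mem (Filter.inter_mem hSU hCc) ?_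
        exact (Filter.biInter_mem hN).2 fun k _ => hA'U k
      refine ⟨B, hBU, fun n => ?_⟩
      have hsub : B \ A n ⊆ ⋃ k ∈ Set.Iic n \ N, {m | (k, m) ∈ S} := by
        intro m hm
        obtain ⟨⟨⟨hmS, hmC⟩, hmN⟩, hmA⟩ := hm
        have hex : ∃ k, m ∉ A' k := by simpa using hmC
        have hfm : f m = Nat.find hex := by simp [hf, hex]
        have h1 : f m ≤ n := by
          rw [hfm]
          exact Nat.find_le (fun hmem => hmA (hA'sub n hmem))
        have h2 : m ∉ A' (f m) := by rw [hfm]; exact Nat.find_spec hex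
        have h3 : f m ∉ N := fun hfN => h2 (Set.mem_iInter₂.1 hmN _ hfN)
        exact Set.mem_biUnion ⟨Set.mem_Iic.2 h1, h3⟩ hmS
      refine Set.Finite.subset ?_ hsub
      refine Set.Finite.biUnion ((Set.finite_Iic n).subset Set.diff_subset) ?_
      intro k hk
      exact Set.not_infinite.1 hk.2
end
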